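/- arXiv:2604.12029 — 10 statements merged into one kernel-verified Lean document; each statement's English description precedes it below -/
import Mathlib

section
/- Let r ≥ 3 and t ≥ 1 be integers, let n ≥ 1, and let k ≥ 1. Then γ_{[k]R}(C_{rt} □ P_n) ≤ t · γ_{[k]R}(C_r □ P_n). -/
open Finset
open scoped Classical

/-- The cylindrical grid `C_m □ P_n`: the Cartesian (box) product of the
cycle on `m` vertices with the path on `n` vertices. -/
def cylGrid (m n : ℕ) : SimpleGraph (Fin m × Fin n) :=
  (SimpleGraph.cycleGraph m).boxProd (SimpleGraph.pathGraph n)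

/-- `f : V → ℕ` is a `[k]`-Roman dominating function on `G`:
values lie in `{0,…,k+1}`, and every vertex `v` with `f v < k` satisfies
`f(N[v]) ≥ k + |AN(v)|`, where `AN(v)` is the set of neighbors of `v`
with positive label. -/
def IsKRomanDF {V : Type*} [Fintype V] (G : SimpleGraph V) (k : ℕ) (f : V → ℕ) : Prop :=
  (∀ v, f v ≤ k + 1) ∧
  (∀ v, f v < k →
    k + (Finset.univ.filter fun u => G.Adj v u ∧ 0 < f u).card ≤
      f v + ∑ u ∈ Finset.univ.filter (fun u => G.Adj v u), f u)

/-- The `[k]`-Roman domination number: the minimum total weight of a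
`[k]`-Roman dominating function. -/
noncomputable def gammaKR {V : Type*} [Fintype V] (G : SimpleGraph V) (k : ℕ) : ℕ :=
  sInf { w : ℕ | ∃ f : V → ℕ, IsKRomanDF G k f ∧ w = ∑ v, f v }

/-- The packing number: the maximum cardinality of a set of vertices whose
closed neighborhoods are pairwise disjoint. -/
noncomputable def packingNumber {V : Type*} [Fintype V] (G : SimpleGraph V) : ℕ :=
  sSup { w : ℕ | ∃ D : Set V,
    (D.Pairwise fun u v =>
      Disjoint (insert u (G.neighborSet u)) (insert v (G.neighborSet v))) ∧
    w = D.ncard }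

/-! ### Auxiliary lemmas -/

lemma aux_fin_val_one {m : ℕ} [NeZero m] (hm : 2 ≤ m) : (1 : Fin m).val = 1 := by
  rw [Fin.val_one', Nat.mod_eq_of_lt (by omega)]

lemma aux_cyc_adj_iff {m : ℕ} [NeZero m] (hm : 3 ≤ m) {u v : Fin m} :
    (SimpleGraph.cycleGraph m).Adj u v ↔ v = u + 1 ∨ v = u - 1 := by
  have h1 : (1 : Fin m).val = 1 := aux_fin_val_one (by omega)
  rw [SimpleGraph.cycleGraph_adj']
  constructor
  · rintro (h | h)
    · right
      have huv : u - v = 1 := Fin.ext (by rw [h, h1])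
      calc v = u - (u - v) := (sub_sub_cancel u v).symm
        _ = u - 1 := by rw [huv]
    · left
      have huv : v - u = 1 := Fin.ext (by rw [h, h1])
      rw [sub_eq_iff_eq_add] at huv
      rw [huv, add_comm]
  · rintro (h | h)
    · right; rw [h, add_sub_cancel_left, h1]
    · left; rw [h, sub_sub_cancel, h1]

lemma aux_one_ne_neg_one {m : ℕ} [NeZero m] (hm : 3 ≤ m) : (1 : Fin m) ≠ -1 := by
  intro h
  have h0 : (1 : Fin m) + 1 = 0 := by nth_rewrite 1 [h]; exact neg_add_cancel 1
  have h2 : ((1 : Fin m) + 1).val = 0 := by simp [h0]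
  have h3 : ((1 : Fin m) + 1).val = ((1 : Fin m).val + (1 : Fin m).val) % m :=
    congrArg Fin.val (Fin.add_def 1 1)
  rw [aux_fin_val_one (by omega), h2, Nat.mod_eq_of_lt (by omega)] at h3
  omega

/-- A local-isomorphism (covering) pulls back `[k]`-Roman dominating functions. -/
lemma aux_cover_KRDF {V W : Type*} [Fintype V] [Fintype W]
    {G : SimpleGraph V} {H : SimpleGraph W} (p : V → W)
    (h1 : ∀ v u, G.Adj v u → H.Adj (p v) (p u))
    (h2 : ∀ v u₁ u₂, G.Adj v u₁ → G.Adj v u₂ → p u₁ = p u₂ → u₁ = u₂)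
    (h3 : ∀ v w, H.Adj (p v) w → ∃ u, G.Adj v u ∧ p u = w)
    {k : ℕ} {f : W → ℕ} (hf : IsKRomanDF H k f) : IsKRomanDF G k (fun v => f (p v)) := by
  constructor
  · intro v; exact hf.1 (p v)
  · intro v hv
    have hsum : ∑ u ∈ Finset.univ.filter (fun u => G.Adj v u), f (p u)
        = ∑ w ∈ Finset.univ.filter (fun w => H.Adj (p v) w), f w := by
      refine Finset.sum_bij (fun u _ => p u) ?_ ?_ ?_ ?_
      · intro u hu
        simp only [Finset.mem_filter, Finset.mem_univ, true_and] at hu ⊢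
        exact h1 v u hu
      · intro u₁ hu₁ u₂ hu₂ h
        simp only [Finset.mem_filter, Finset.mem_univ, true_and] at hu₁ hu₂
        exact h2 v u₁ u₂ hu₁ hu₂ h
      · intro w hw
        simp only [Finset.mem_filter, Finset.mem_univ, true_and] at hw
        obtain ⟨u, hu, hpu⟩ := h3 v w hw
        exact ⟨u, by simp [hu], hpu⟩
      · intro u _; rfl
    have hcard : (Finset.univ.filter fun u => G.Adj v u ∧ 0 < f (p u)).card
        = (Finset.univ.filter fun w => H.Adj (p v) w ∧ 0 < f w).card := by
      refine Finset.card_bij (fun u _ => p u) ?_ ?_ ?_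
      · intro u hu
        simp only [Finset.mem_filter, Finset.mem_univ, true_and] at hu ⊢
        exact ⟨h1 v u hu.1, hu.2⟩
      · intro u₁ hu₁ u₂ hu₂ h
        simp only [Finset.mem_filter, Finset.mem_univ, true_and] at hu₁ hu₂
        exact h2 v u₁ u₂ hu₁.1 hu₂.1 h
      · intro w hw
        simp only [Finset.mem_filter, Finset.mem_univ, true_and] at hw
        obtain ⟨u, hu, hpu⟩ := h3 v w hw.1
        exact ⟨u, by simp [hu, hpu, hw.2], hpu⟩
    rw [hsum, hcard]
    exact hf.2 (p v) hv

lemma aux_sum_mod (r t : ℕ) (hr : 0 < r) (g : Fin r → ℕ) :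
    ∑ i : Fin (r * t), g ⟨i.val % r, Nat.mod_lt _ hr⟩ = t * ∑ c, g c := by
  set G : ℕ → ℕ := fun m => g ⟨m % r, Nat.mod_lt _ hr⟩ with hG
  have key : ∀ s : ℕ, ∑ m ∈ Finset.range (r * s), G m = s * ∑ m ∈ Finset.range r, G m := by
    intro s
    induction s with
    | zero => simp
    | succ s ih =>
      have hrs : r * (s + 1) = r * s + r := by ring
      rw [hrs, Finset.sum_range_add, ih]
      have hshift : ∑ m ∈ Finset.range r, G (r * s + m) = ∑ m ∈ Finset.range r, G m := by
        refine Finset.sum_congr rfl fun m hm => ?_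
        simp only [hG]
        congr 1
        ext
        simp [Nat.mul_add_mod]
      rw [hshift]; ring
  have h1 : ∑ i : Fin (r * t), g ⟨i.val % r, Nat.mod_lt _ hr⟩
      = ∑ m ∈ Finset.range (r * t), G m := Fin.sum_univ_eq_sum_range G (r * t)
  have h2 : ∑ m ∈ Finset.range r, G m = ∑ c : Fin r, g c := by
    rw [← Fin.sum_univ_eq_sum_range G r]
    refine Finset.sum_congr rfl fun c _ => ?_
    simp only [hG]
    congr 1
    ext
    simp [Nat.mod_eq_of_lt c.isLt]
  rw [h1, key, h2]

theorem gammaKR_cyl_mul_le (r t n k : ℕ) (hr : 3 ≤ r) (ht : 1 ≤ t) (hn : 1 ≤ n)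
    (hk : 1 ≤ k) :
    gammaKR (cylGrid (r * t) n) k ≤ t * gammaKR (cylGrid r n) k := by
  have hr0 : 0 < r := by omega
  have hrt : 3 ≤ r * t := le_trans hr (Nat.le_mul_of_pos_right r (by omega))
  haveI : NeZero r := ⟨by omega⟩
  haveI : NeZero (r * t) := ⟨by omega⟩
  -- the projection map
  set π : Fin (r * t) → Fin r := fun i => ⟨i.val % r, Nat.mod_lt _ hr0⟩ with hπ
  have πadd : ∀ a b : Fin (r * t), π (a + b) = π a + π b := by
    intro a b
    simp only [hπ]
    ext
    rw [Fin.add_def, Fin.add_def]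
    simp only
    rw [Nat.mod_mod_of_dvd _ ⟨t, rfl⟩, Nat.add_mod]
  have πsub : ∀ a b : Fin (r * t), π (a - b) = π a - π b := by
    intro a b
    have h : π (a - b) + π b = π a := by rw [← πadd, sub_add_cancel]
    exact eq_sub_of_add_eq h
  have πone : π 1 = 1 := by
    simp only [hπ]
    ext
    simp only
    rw [aux_fin_val_one (m := r * t) (by omega), aux_fin_val_one (m := r) (by omega),
      Nat.mod_eq_of_lt (by omega)]
  -- adjacency preservation in the cycle
  have cadj : ∀ a b : Fin (r * t), (SimpleGraph.cycleGraph (r * t)).Adj a b →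
      (SimpleGraph.cycleGraph r).Adj (π a) (π b) := by
    intro a b hab
    rw [aux_cyc_adj_iff hrt] at hab
    rw [aux_cyc_adj_iff hr]
    rcases hab with rfl | rfl
    · left; rw [πadd, πone]
    · right; rw [πsub, πone]
  -- the big map
  set P : Fin (r * t) × Fin n → Fin r × Fin n := fun v => (π v.1, v.2) with hP
  have hPfst : ∀ v : Fin (r * t) × Fin n, (P v).1 = π v.1 := fun _ => rfl
  have hPsnd : ∀ v : Fin (r * t) × Fin n, (P v).2 = v.2 := fun _ => rfl
  -- get an optimal function on the small graph
  have hne : { w : ℕ | ∃ f : Fin r × Fin n → ℕ,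
      IsKRomanDF (cylGrid r n) k f ∧ w = ∑ v, f v }.Nonempty := by
    refine ⟨∑ _v : Fin r × Fin n, k, fun _ => k,
      ⟨fun v => Nat.le_succ k, fun v hv => absurd hv (lt_irrefl k)⟩, rfl⟩
  obtain ⟨f, hf, hw⟩ := Nat.sInf_mem hne
  -- P is a covering map
  have H1 : ∀ v u, (cylGrid (r * t) n).Adj v u → (cylGrid r n).Adj (P v) (P u) := by
    rintro ⟨a, b⟩ ⟨c, d⟩ h
    rw [cylGrid, SimpleGraph.boxProd_adj] at h ⊢
    rcases h with ⟨h', h''⟩ | ⟨h', h''⟩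
    · exact Or.inl ⟨cadj a c h', h''⟩
    · exact Or.inr ⟨h', congrArg π h''⟩
  have H2 : ∀ v u₁ u₂, (cylGrid (r * t) n).Adj v u₁ → (cylGrid (r * t) n).Adj v u₂ →
      P u₁ = P u₂ → u₁ = u₂ := by
    rintro ⟨a, b⟩ ⟨c₁, d₁⟩ ⟨c₂, d₂⟩ h₁ h₂ heq
    rw [cylGrid, SimpleGraph.boxProd_adj] at h₁ h₂
    have heq1 : π c₁ = π c₂ := congrArg Prod.fst heq
    have heq2 : d₁ = d₂ := congrArg Prod.snd heq
    rcases h₁ with ⟨hc₁, hb₁⟩ | ⟨hd₁, ha₁⟩ <;> rcases h₂ with ⟨hc₂, hb₂⟩ | ⟨hd₂, ha₂⟩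
    · -- both cycle-type
      rw [aux_cyc_adj_iff hrt] at hc₁ hc₂
      have hcc : c₁ = c₂ := by
        rcases hc₁ with rfl | rfl <;> rcases hc₂ with rfl | rfl
        · rfl
        · exfalso
          rw [πadd, πsub, πone] at heq1
          have h11 : (1 : Fin r) = -1 := by
            have hpa : π a + 1 = π a + -1 := by rw [heq1, sub_eq_add_neg]
            exact add_left_cancel hpa
          exact aux_one_ne_neg_one hr h11
        · exfalso
          rw [πadd, πsub, πone] at heq1
          have h11 : (1 : Fin r) = -1 := by
            have hpa : π a + 1 = π a + -1 := by rw [← heq1, sub_eq_add_neg]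
            exact add_left_cancel hpa
          exact aux_one_ne_neg_one hr h11
        · rfl
      exact Prod.ext hcc heq2
    · -- u₁ cycle-type, u₂ path-type
      exfalso
      have hbd₁ : b = d₁ := hb₁
      have hbd₂ : (SimpleGraph.pathGraph n).Adj b d₂ := hd₂
      exact hbd₂.ne (hbd₁.trans heq2)
    · -- u₁ path-type, u₂ cycle-type
      exfalso
      have hbd₂ : b = d₂ := hb₂
      have hbd₁ : (SimpleGraph.pathGraph n).Adj b d₁ := hd₁
      exact hbd₁.ne (hbd₂.trans heq2.symm)
    · -- both path-type
      have hac₁ : a = c₁ := ha₁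
      have hac₂ : a = c₂ := ha₂
      exact Prod.ext (hac₁.symm.trans hac₂) heq2
  have H3 : ∀ v w, (cylGrid r n).Adj (P v) w → ∃ u, (cylGrid (r * t) n).Adj v u ∧ P u = w := by
    rintro ⟨a, b⟩ ⟨c, d⟩ h
    rw [cylGrid, SimpleGraph.boxProd_adj] at h
    rcases h with ⟨hc, hd⟩ | ⟨hd, hc⟩
    · have hc' : (SimpleGraph.cycleGraph r).Adj (π a) c := hc
      have hd' : b = d := hd
      rw [aux_cyc_adj_iff hr] at hc'
      rcases hc' with rfl | rfl
      · refine ⟨(a + 1, b), ?_, ?_⟩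
        · rw [cylGrid, SimpleGraph.boxProd_adj]
          exact Or.inl ⟨by rw [aux_cyc_adj_iff hrt]; left; rfl, rfl⟩
        · exact Prod.ext (show π (a + 1) = π a + 1 by rw [πadd, πone]) hd'
      · refine ⟨(a - 1, b), ?_, ?_⟩
        · rw [cylGrid, SimpleGraph.boxProd_adj]
          exact Or.inl ⟨by rw [aux_cyc_adj_iff hrt]; right; rfl, rfl⟩
        · exact Prod.ext (show π (a - 1) = π a - 1 by rw [πsub, πone]) hd'
    · have hc' : π a = c := hc
      have hd' : (SimpleGraph.pathGraph n).Adj b d := hd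
      refine ⟨(a, d), ?_, ?_⟩
      · rw [cylGrid, SimpleGraph.boxProd_adj]
        exact Or.inr ⟨hd', rfl⟩
      · exact Prod.ext hc' rfl
  have hg : IsKRomanDF (cylGrid (r * t) n) k (fun v => f (P v)) :=
    aux_cover_KRDF P H1 H2 H3 hf
  have hle : gammaKR (cylGrid (r * t) n) k ≤ ∑ v : Fin (r * t) × Fin n, f (P v) :=
    Nat.sInf_le ⟨fun v => f (P v), hg, rfl⟩
  have hsum : ∑ v : Fin (r * t) × Fin n, f (P v) = t * ∑ v : Fin r × Fin n, f v := by
    rw [Fintype.sum_prod_type]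
    have h := aux_sum_mod r t hr0 (fun c => ∑ j : Fin n, f (c, j))
    rw [Fintype.sum_prod_type]
    exact h
  rw [hsum, ← hw] at hle
  exact hle
end

section
/- Let k ≥ 1 and n ≥ 2. Then γ_{[k]R}(C_9 □ P_n) ≤ 2n(k+1) + 2k. -/
/-!
Label with `k + 1` the vertices `(i, j)` of `C_9 □ P_n` with `i - 2j ≡ 0` or `4 (mod 9)`, two in
each column. A step along the cycle changes `i - 2j` by `±1` and a step along the path by `∓2`, so
every other vertex has a neighbour labelled `k + 1`, except `i - 2j ≡ 7` in the first column and
`i - 2j ≡ 6` in the last one, which are labelled `k` themselves. A vertex with a neighbour labelled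
`k + 1` satisfies the `[k]`-Roman condition, since each active neighbour contributes at least `1`
to `f(N[v])`. The total weight is `2n(k + 1) + 2k`.
-/

open Finset
open scoped Classical

open Fin.CommRing

section RomanDomination

variable {V : Type*} [Fintype V] {G : SimpleGraph V} {k : ℕ} {f : V → ℕ}

theorem gammaKR_le_sum (hf : IsKRomanDF G k f) : gammaKR G k ≤ ∑ v, f v :=
  Nat.sInf_le ⟨f, hf, rfl⟩

theorem isKRomanDF_of_exists_adj (hle : ∀ v, f v ≤ k + 1)
    (hdom : ∀ v, f v < k → ∃ u, G.Adj v u ∧ k + 1 ≤ f u) : IsKRomanDF G k f := by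
  refine ⟨hle, fun v hv => ?_⟩
  obtain ⟨u, hvu, hu⟩ := hdom v hv
  set T := univ.filter fun w => G.Adj v w ∧ 0 < f w
  have huT : u ∈ T := by simp only [T, mem_filter, mem_univ, hvu, true_and]; omega
  have hrest : #(T.erase u) ≤ ∑ w ∈ T.erase u, f w := by
    simpa using card_nsmul_le_sum _ f 1 fun w hw => (mem_filter.mp (mem_of_mem_erase hw)).2.2
  calc k + #T = k + 1 + #(T.erase u) := by rw [← card_erase_add_one huT]; ring
    _ ≤ f u + ∑ w ∈ T.erase u, f w := add_le_add hu hrest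
    _ = ∑ w ∈ T, f w := add_sum_erase T f huT
    _ ≤ ∑ w ∈ univ.filter (G.Adj v ·), f w :=
      sum_le_sum_of_subset fun w hw => by simp_all [T]
    _ ≤ f v + ∑ w ∈ univ.filter (G.Adj v ·), f w := le_add_self

end RomanDomination

section CylinderGrid

variable {m n : ℕ}

def diagOffset (v : Fin (m + 2) × Fin n) : Fin (m + 2) := v.1 - (2 * v.2.val : ℕ)

theorem exists_adj_diagOffset_add_one (v : Fin (m + 2) × Fin n) :
    ∃ u, (cylGrid (m + 2) n).Adj v u ∧ diagOffset u = diagOffset v + 1 :=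
  ⟨(v.1 + 1, v.2),
    SimpleGraph.boxProd_adj_left.mpr (SimpleGraph.cycleGraph_adj.mpr (Or.inr (by ring))),
    by simp only [diagOffset]; ring⟩

theorem exists_adj_diagOffset_sub_one (v : Fin (m + 2) × Fin n) :
    ∃ u, (cylGrid (m + 2) n).Adj v u ∧ diagOffset u = diagOffset v - 1 :=
  ⟨(v.1 - 1, v.2),
    SimpleGraph.boxProd_adj_left.mpr (SimpleGraph.cycleGraph_adj.mpr (Or.inl (by ring))),
    by simp only [diagOffset]; ring⟩

theorem diagOffset_of_val_add_one {j j' : Fin n} (h : j.val + 1 = j'.val) (i : Fin (m + 2)) :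
    diagOffset (i, j') = diagOffset (i, j) - 2 := by
  simp only [diagOffset, ← h]; push_cast; ring

theorem exists_adj_diagOffset_sub_two {v : Fin (m + 2) × Fin n} (hv : v.2.val + 1 < n) :
    ∃ u, (cylGrid (m + 2) n).Adj v u ∧ diagOffset u = diagOffset v - 2 :=
  ⟨(v.1, ⟨_, hv⟩),
    SimpleGraph.boxProd_adj_right.mpr (SimpleGraph.pathGraph_adj.mpr (Or.inl rfl)),
    diagOffset_of_val_add_one rfl v.1⟩

theorem exists_adj_diagOffset_add_two {v : Fin (m + 2) × Fin n} (hv : v.2.val ≠ 0) :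
    ∃ u, (cylGrid (m + 2) n).Adj v u ∧ diagOffset u = diagOffset v + 2 := by
  have h : (v.2.val - 1) + 1 = v.2.val := Nat.sub_add_cancel (Nat.one_le_iff_ne_zero.mpr hv)
  refine ⟨(v.1, ⟨_, (Nat.sub_le _ _).trans_lt v.2.isLt⟩),
    SimpleGraph.boxProd_adj_right.mpr (SimpleGraph.pathGraph_adj.mpr (Or.inr h)), ?_⟩
  rw [← sub_eq_iff_eq_add, ← diagOffset_of_val_add_one h]

end CylinderGrid

section C9

variable {k n : ℕ}

abbrev IsDiagCenter (r : Fin 9) : Prop := r = 0 ∨ r = 4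

def c9RomanFun (k n : ℕ) (v : Fin 9 × Fin n) : ℕ :=
  if IsDiagCenter (diagOffset v) then k + 1
  else if (diagOffset v = 7 ∧ v.2.val = 0) ∨ (diagOffset v = 6 ∧ v.2.val + 1 = n) then k
  else 0

theorem fin_nine_diagCenter_cases : ∀ r : Fin 9,
    IsDiagCenter r ∨ IsDiagCenter (r + 1) ∨ IsDiagCenter (r - 1) ∨
      (IsDiagCenter (r - 2) ∧ IsDiagCenter (r + 2)) ∨
      (r = 6 ∧ IsDiagCenter (r - 2)) ∨ (r = 7 ∧ IsDiagCenter (r + 2)) := by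
  decide

theorem exists_adj_c9RomanFun_eq (hn : 2 ≤ n) {v : Fin 9 × Fin n} (hv : c9RomanFun k n v < k) :
    ∃ u, (cylGrid 9 n).Adj v u ∧ c9RomanFun k n u = k + 1 := by
  have hcenter : ∀ c, (∃ u, (cylGrid 9 n).Adj v u ∧ diagOffset u = c) → IsDiagCenter c →
      ∃ u, (cylGrid 9 n).Adj v u ∧ c9RomanFun k n u = k + 1 := by
    rintro c ⟨u, hvu, rfl⟩ hc
    exact ⟨u, hvu, if_pos hc⟩
  simp only [c9RomanFun] at hv
  split_ifs at hv with hc hs <;> try omega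
  rcases fin_nine_diagCenter_cases (diagOffset v) with h | h | h | ⟨h₁, h₂⟩ | ⟨h₆, h⟩ | ⟨h₇, h⟩
  · exact absurd h hc
  · exact hcenter _ (exists_adj_diagOffset_add_one v) h
  · exact hcenter _ (exists_adj_diagOffset_sub_one v) h
  · by_cases hlast : v.2.val + 1 < n
    · exact hcenter _ (exists_adj_diagOffset_sub_two hlast) h₁
    · exact hcenter _ (exists_adj_diagOffset_add_two (by omega)) h₂
  · exact hcenter _ (exists_adj_diagOffset_sub_two (by simp [h₆] at hs; omega)) h
  · exact hcenter _ (exists_adj_diagOffset_add_two (by simpa [h₇] using hs)) h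

theorem sum_c9RomanFun_column (j : Fin n) :
    ∑ i, c9RomanFun k n (i, j) =
      2 * (k + 1) + (if j.val = 0 then k else 0) + (if j.val + 1 = n then k else 0) := by
  let g : Fin 9 → ℕ := fun r => if IsDiagCenter r then k + 1
    else if (r = 7 ∧ j.val = 0) ∨ (r = 6 ∧ j.val + 1 = n) then k else 0
  calc ∑ i, c9RomanFun k n (i, j) = ∑ i, g (i - (2 * j.val : ℕ)) := rfl
    _ = ∑ r, g r := (Equiv.subRight ((2 * j.val : ℕ) : Fin 9)).sum_comp g
    _ = _ := by
      simp only [g, IsDiagCenter, Fin.sum_univ_succ, Fin.reduceEq, or_false, ↓reduceIte,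
        Fin.succ_ne_zero, false_or, Fin.succ_zero_eq_one, false_and, or_self,
        Fin.succ_one_eq_two, Fin.reduceSucc, true_and, univ_unique, Fin.default_eq_zero,
        sum_singleton, add_zero, zero_add]
      split_ifs <;> omega

theorem sum_c9RomanFun (hn : n ≠ 0) : ∑ v, c9RomanFun k n v = 2 * n * (k + 1) + 2 * k := by
  obtain ⟨n, rfl⟩ := Nat.exists_eq_add_one_of_ne_zero hn
  rw [Fintype.sum_prod_type_right]
  simp only [sum_c9RomanFun_column, sum_add_distrib, sum_const, card_univ, Fintype.card_fin,
    Fin.sum_univ_eq_sum_range (fun i => if i = 0 then k else 0),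
    Fin.sum_univ_eq_sum_range (fun i => if i + 1 = n + 1 then k else 0)]
  simp only [smul_eq_mul, sum_ite_eq', mem_range, lt_add_iff_pos_left, Order.lt_add_one_iff,
    zero_le, ↓reduceIte, Nat.add_right_cancel_iff, lt_add_iff_pos_right, Order.lt_one_iff]
  ring

end C9

theorem gammaKR_C9_linear_general (k n : ℕ) (hn : 2 ≤ n) :
    gammaKR (cylGrid 9 n) k ≤ 2 * n * (k + 1) + 2 * k := by
  refine (gammaKR_le_sum (isKRomanDF_of_exists_adj (fun v => ?_)
    fun v hv => ?_)).trans (sum_c9RomanFun (by omega)).le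
  · unfold c9RomanFun; split_ifs <;> omega
  · obtain ⟨u, hvu, hu⟩ := exists_adj_c9RomanFun_eq hn hv
    exact ⟨u, hvu, hu.ge⟩

theorem gammaKR_C9_linear (k n : ℕ) (hk : 1 ≤ k) (hn : 2 ≤ n) :
    gammaKR (cylGrid 9 n) k ≤ 2 * n * (k + 1) + 2 * k :=
  gammaKR_C9_linear_general k n hn
end

section
/- Let k > 2 and n ≥ 4. Then γ_{[k]R}(C_9 □ P_n) ≤ 9(n−2)·⌈(k+4)/5⌉ + 18·⌈(k+3−⌈(k+4)/5⌉)/3⌉. -/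
open Finset
open scoped Classical

lemma cyc9_adj (i x : Fin 9) :
    (SimpleGraph.cycleGraph 9).Adj i x ↔
      x.val = (i.val + 1) % 9 ∨ x.val = (i.val + 8) % 9 := by
  have hi := i.isLt; have hx := x.isLt
  rw [SimpleGraph.cycleGraph_adj (n := 7)]
  simp only [Fin.ext_iff, Fin.sub_def, Fin.val_one]
  omega

def fAux (n A B : ℕ) (v : Fin 9 × Fin n) : ℕ :=
  if v.2.val = 0 ∨ v.2.val = n - 1 then B else A

lemma fAux_sum (n A B : ℕ) (hn : 4 ≤ n) :
    ∑ v : Fin 9 × Fin n, fAux n A B v = 9 * ((n - 2) * A + 2 * B) := by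
  rw [Fintype.sum_prod_type]
  have h1 : ∀ i : Fin 9, ∑ j : Fin n, fAux n A B (i, j) = (n - 2) * A + 2 * B := by
    intro i
    have hfilt : (univ.filter fun j : Fin n => j.val = 0 ∨ j.val = n - 1)
        = {(⟨0, by omega⟩ : Fin n), ⟨n - 1, by omega⟩} := by
      ext j; have := j.isLt
      simp only [mem_filter, mem_univ, true_and, mem_insert, mem_singleton, Fin.ext_iff]
      all_goals omega
    have hcard : (univ.filter fun j : Fin n => j.val = 0 ∨ j.val = n - 1).card = 2 := by
      rw [hfilt]
      rw [Finset.card_insert_of_notMem (by simp only [mem_singleton, Fin.ext_iff]; omega)]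
      simp
    have hcard2 : (univ.filter fun j : Fin n => ¬(j.val = 0 ∨ j.val = n - 1)).card = n - 2 := by
      have := Finset.card_filter_add_card_filter_not (s := (univ : Finset (Fin n)))
        (p := fun j : Fin n => j.val = 0 ∨ j.val = n - 1)
      simp only [Finset.card_univ, Fintype.card_fin] at this
      omega
    unfold fAux
    rw [Finset.sum_ite, Finset.sum_const, Finset.sum_const, hcard, hcard2]
    simp [mul_comm, Nat.add_comm]
  rw [Finset.sum_congr rfl (fun i _ => h1 i), Finset.sum_const]
  simp [mul_comm]

lemma fAux_krdf (k n A B : ℕ) (hn : 4 ≤ n) (hk : 3 ≤ k)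
    (hA : A = (k + 8) / 5) (hB : B = (k + 5 - A) / 3) :
    IsKRomanDF (cylGrid 9 n) k (fAux n A B) := by
  constructor
  · intro v; unfold fAux; split_ifs <;> omega
  · rintro ⟨i, j⟩ _
    have hi := i.isLt; have hj := j.isLt
    obtain ⟨ip, hip⟩ : ∃ x : Fin 9, x.val = (i.val + 1) % 9 :=
      ⟨⟨_, Nat.mod_lt _ (by norm_num)⟩, rfl⟩
    obtain ⟨im, him⟩ : ∃ x : Fin 9, x.val = (i.val + 8) % 9 :=
      ⟨⟨_, Nat.mod_lt _ (by norm_num)⟩, rfl⟩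
    by_cases hj0 : j.val = 0
    · -- bottom boundary
      obtain ⟨jp, hjp⟩ : ∃ y : Fin n, y.val = 1 := ⟨⟨1, by omega⟩, rfl⟩
      have hne1 : (ip, j) ∉ ({(im, j), (i, jp)} : Finset (Fin 9 × Fin n)) := by
        simp only [mem_insert, mem_singleton, Prod.mk.injEq, Fin.ext_iff, hip, him, hjp]
        omega
      have hne2 : (im, j) ∉ ({(i, jp)} : Finset (Fin 9 × Fin n)) := by
        simp only [mem_singleton, Prod.mk.injEq, Fin.ext_iff, him, hjp]
        omega
      have hSN : univ.filter (fun u => (cylGrid 9 n).Adj (i, j) u)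
          = {(ip, j), (im, j), (i, jp)} := by
        ext ⟨x, y⟩
        have hx := x.isLt; have hy := y.isLt
        simp only [mem_filter, mem_univ, true_and, cylGrid, SimpleGraph.boxProd_adj,
          cyc9_adj, SimpleGraph.pathGraph_adj, mem_insert, mem_singleton, Prod.mk.injEq,
          Fin.ext_iff, hip, him, hjp]
        omega
      have hcard : (univ.filter fun u => (cylGrid 9 n).Adj (i, j) u ∧ 0 < fAux n A B u).card
          ≤ 3 := by
        have hsub : (univ.filter fun u => (cylGrid 9 n).Adj (i, j) u ∧ 0 < fAux n A B u)
            ⊆ {(ip, j), (im, j), (i, jp)} := by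
          intro u hu
          rw [← hSN]
          simp only [mem_filter] at hu ⊢
          exact ⟨hu.1, hu.2.1⟩
        refine le_trans (Finset.card_le_card hsub) ?_
        rw [Finset.card_insert_of_notMem hne1, Finset.card_insert_of_notMem hne2,
          Finset.card_singleton]
      rw [hSN, Finset.sum_insert hne1, Finset.sum_insert hne2, Finset.sum_singleton]
      have h1 : fAux n A B (ip, j) = B := by simp [fAux, hj0]
      have h2 : fAux n A B (im, j) = B := by simp [fAux, hj0]
      have h3 : fAux n A B (i, jp) = A := by
        simp only [fAux]; rw [if_neg]; omega
      have h4 : fAux n A B (i, j) = B := by simp [fAux, hj0]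
      rw [h1, h2, h3, h4]
      omega
    · by_cases hjl : j.val = n - 1
      · -- top boundary
        obtain ⟨jm, hjm⟩ : ∃ y : Fin n, y.val = n - 2 := ⟨⟨n - 2, by omega⟩, rfl⟩
        have hne1 : (ip, j) ∉ ({(im, j), (i, jm)} : Finset (Fin 9 × Fin n)) := by
          simp only [mem_insert, mem_singleton, Prod.mk.injEq, Fin.ext_iff, hip, him, hjm]
          omega
        have hne2 : (im, j) ∉ ({(i, jm)} : Finset (Fin 9 × Fin n)) := by
          simp only [mem_singleton, Prod.mk.injEq, Fin.ext_iff, him, hjm]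
          omega
        have hSN : univ.filter (fun u => (cylGrid 9 n).Adj (i, j) u)
            = {(ip, j), (im, j), (i, jm)} := by
          ext ⟨x, y⟩
          have hx := x.isLt; have hy := y.isLt
          simp only [mem_filter, mem_univ, true_and, cylGrid, SimpleGraph.boxProd_adj,
            cyc9_adj, SimpleGraph.pathGraph_adj, mem_insert, mem_singleton, Prod.mk.injEq,
            Fin.ext_iff, hip, him, hjm]
          omega
        have hcard : (univ.filter fun u => (cylGrid 9 n).Adj (i, j) u ∧ 0 < fAux n A B u).card
            ≤ 3 := by
          have hsub : (univ.filter fun u => (cylGrid 9 n).Adj (i, j) u ∧ 0 < fAux n A B u)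
              ⊆ {(ip, j), (im, j), (i, jm)} := by
            intro u hu
            rw [← hSN]
            simp only [mem_filter] at hu ⊢
            exact ⟨hu.1, hu.2.1⟩
          refine le_trans (Finset.card_le_card hsub) ?_
          rw [Finset.card_insert_of_notMem hne1, Finset.card_insert_of_notMem hne2,
            Finset.card_singleton]
        rw [hSN, Finset.sum_insert hne1, Finset.sum_insert hne2, Finset.sum_singleton]
        have h1 : fAux n A B (ip, j) = B := by simp [fAux, hjl]
        have h2 : fAux n A B (im, j) = B := by simp [fAux, hjl]
        have h3 : fAux n A B (i, jm) = A := by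
          simp only [fAux]; rw [if_neg]; omega
        have h4 : fAux n A B (i, j) = B := by simp [fAux, hjl]
        rw [h1, h2, h3, h4]
        omega
      · -- interior
        obtain ⟨jp, hjp⟩ : ∃ y : Fin n, y.val = j.val + 1 := ⟨⟨j.val + 1, by omega⟩, rfl⟩
        obtain ⟨jm, hjm⟩ : ∃ y : Fin n, y.val = j.val - 1 := ⟨⟨j.val - 1, by omega⟩, rfl⟩
        have hne1 : (ip, j) ∉ ({(im, j), (i, jp), (i, jm)} : Finset (Fin 9 × Fin n)) := by
          simp only [mem_insert, mem_singleton, Prod.mk.injEq, Fin.ext_iff, hip, him, hjp, hjm]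
          omega
        have hne2 : (im, j) ∉ ({(i, jp), (i, jm)} : Finset (Fin 9 × Fin n)) := by
          simp only [mem_insert, mem_singleton, Prod.mk.injEq, Fin.ext_iff, him, hjp, hjm]
          omega
        have hne3 : (i, jp) ∉ ({(i, jm)} : Finset (Fin 9 × Fin n)) := by
          simp only [mem_singleton, Prod.mk.injEq, Fin.ext_iff, hjp, hjm]
          omega
        have hSN : univ.filter (fun u => (cylGrid 9 n).Adj (i, j) u)
            = {(ip, j), (im, j), (i, jp), (i, jm)} := by
          ext ⟨x, y⟩
          have hx := x.isLt; have hy := y.isLt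
          simp only [mem_filter, mem_univ, true_and, cylGrid, SimpleGraph.boxProd_adj,
            cyc9_adj, SimpleGraph.pathGraph_adj, mem_insert, mem_singleton, Prod.mk.injEq,
            Fin.ext_iff, hip, him, hjp, hjm]
          omega
        have hcard : (univ.filter fun u => (cylGrid 9 n).Adj (i, j) u ∧ 0 < fAux n A B u).card
            ≤ 4 := by
          have hsub : (univ.filter fun u => (cylGrid 9 n).Adj (i, j) u ∧ 0 < fAux n A B u)
              ⊆ {(ip, j), (im, j), (i, jp), (i, jm)} := by
            intro u hu
            rw [← hSN]
            simp only [mem_filter] at hu ⊢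
            exact ⟨hu.1, hu.2.1⟩
          refine le_trans (Finset.card_le_card hsub) ?_
          rw [Finset.card_insert_of_notMem hne1, Finset.card_insert_of_notMem hne2,
            Finset.card_insert_of_notMem hne3, Finset.card_singleton]
        rw [hSN, Finset.sum_insert hne1, Finset.sum_insert hne2, Finset.sum_insert hne3,
          Finset.sum_singleton]
        have h1 : fAux n A B (ip, j) = A := by
          simp only [fAux]; rw [if_neg]; omega
        have h2 : fAux n A B (im, j) = A := by
          simp only [fAux]; rw [if_neg]; omega
        have h4 : fAux n A B (i, j) = A := by
          simp only [fAux]; rw [if_neg]; omega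
        have h3 : fAux n A B (i, jp) = A ∨ fAux n A B (i, jp) = B := by
          unfold fAux; split_ifs
          exacts [Or.inr rfl, Or.inl rfl]
        have h5 : fAux n A B (i, jm) = A ∨ fAux n A B (i, jm) = B := by
          unfold fAux; split_ifs
          exacts [Or.inr rfl, Or.inl rfl]
        rw [h1, h2, h4]
        rcases h3 with h3 | h3 <;> rcases h5 with h5 | h5 <;> rw [h3, h5] <;> omega


theorem gammaKR_C9_uniform (k n : ℕ) (hk : 2 < k) (hn : 4 ≤ n) :
    (gammaKR (cylGrid 9 n) k : ℤ) ≤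
      9 * ((n : ℤ) - 2) * ⌈((k : ℚ) + 4) / 5⌉ +
        18 * ⌈((k : ℚ) + 3 - ((⌈((k : ℚ) + 4) / 5⌉ : ℤ) : ℚ)) / 3⌉ := by
  set A : ℕ := (k + 8) / 5 with hA
  set B : ℕ := (k + 5 - A) / 3 with hB
  have hc1 : (⌈((k : ℚ) + 4) / 5⌉ : ℤ) = (A : ℤ) := by
    rw [Int.ceil_eq_iff]
    constructor
    · rw [lt_div_iff₀ (by norm_num : (0:ℚ) < 5)]
      have : ((5:ℚ) * A) ≤ (k : ℚ) + 8 := by exact_mod_cast (by omega : 5 * A ≤ k + 8)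
      push_cast
      linarith
    · rw [div_le_iff₀ (by norm_num : (0:ℚ) < 5)]
      have h5 : (k : ℤ) + 4 ≤ 5 * A := by exact_mod_cast (by omega : k + 4 ≤ 5 * A)
      have : (k : ℚ) + 4 ≤ 5 * A := by exact_mod_cast h5
      push_cast
      linarith
  have hc2 : (⌈((k : ℚ) + 3 - ((A : ℤ) : ℚ)) / 3⌉ : ℤ) = (B : ℤ) := by
    rw [Int.ceil_eq_iff]
    have hAk : A ≤ k + 1 := by omega
    have e1 : 3 * B + A ≤ k + 5 := by omega
    have e2 : k + 3 ≤ 3 * B + A := by omega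
    constructor
    · rw [lt_div_iff₀ (by norm_num : (0:ℚ) < 3)]
      have : ((3 * B + A : ℕ) : ℚ) ≤ ((k + 5 : ℕ) : ℚ) := by exact_mod_cast e1
      push_cast at this ⊢
      linarith
    · rw [div_le_iff₀ (by norm_num : (0:ℚ) < 3)]
      have : ((k + 3 : ℕ) : ℚ) ≤ ((3 * B + A : ℕ) : ℚ) := by exact_mod_cast e2
      push_cast at this ⊢
      linarith
  have hdf := fAux_krdf k n A B hn (by omega) hA hB
  have h1 : gammaKR (cylGrid 9 n) k ≤ 9 * ((n - 2) * A + 2 * B) :=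
    Nat.sInf_le ⟨fAux n A B, hdf, (fAux_sum n A B hn).symm⟩
  have hcast : ((9 * ((n - 2) * A + 2 * B) : ℕ) : ℤ)
      = 9 * ((n : ℤ) - 2) * (A : ℤ) + 18 * (B : ℤ) := by
    push_cast [Nat.cast_sub (show 2 ≤ n from by omega)]
    ring
  rw [hc1, hc2, ← hcast]
  exact_mod_cast h1
end

section
/- Let k > 2 and n ≥ 4. Then γ_{[k]R}(C_9 □ P_n) ≤ (9nk + 81n + 6k − 6)/5, i.e., 5·γ_{[k]R}(C_9 □ P_n) ≤ 9nk + 81n + 6k − 6. -/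
open Finset
open scoped Classical

lemma cyl9_adj_iff {n : ℕ} (v u : Fin 9 × Fin n) :
    (cylGrid 9 n).Adj v u ↔
      ((u.1 = v.1 + 1 ∨ u.1 = v.1 - 1) ∧ u.2 = v.2) ∨
      ((v.2.val + 1 = u.2.val ∨ u.2.val + 1 = v.2.val) ∧ u.1 = v.1) := by
  have hcyc : ∀ a b : Fin 9, (SimpleGraph.cycleGraph 9).Adj a b ↔ b = a + 1 ∨ b = a - 1 := by
    decide
  simp only [cylGrid, SimpleGraph.boxProd_adj, hcyc, SimpleGraph.pathGraph_adj]
  constructor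
  · rintro (⟨h1, h2⟩ | ⟨h1, h2⟩)
    · exact Or.inl ⟨h1, h2.symm⟩
    · exact Or.inr ⟨h1, h2.symm⟩
  · rintro (⟨h1, h2⟩ | ⟨h1, h2⟩)
    · exact Or.inl ⟨h1, h2.symm⟩
    · exact Or.inr ⟨h1, h2.symm⟩

lemma card3' {α : Type*} [DecidableEq α] (a b c : α) : ({a, b, c} : Finset α).card ≤ 3 :=
  calc ({a, b, c} : Finset α).card ≤ ({b, c} : Finset α).card + 1 := card_insert_le _ _
    _ ≤ (({c} : Finset α).card + 1) + 1 := Nat.add_le_add_right (card_insert_le _ _) 1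
    _ = 3 := by rw [card_singleton]

lemma card4' {α : Type*} [DecidableEq α] (a b c d : α) : ({a, b, c, d} : Finset α).card ≤ 4 :=
  calc ({a, b, c, d} : Finset α).card ≤ ({b, c, d} : Finset α).card + 1 := card_insert_le _ _
    _ ≤ 3 + 1 := Nat.add_le_add_right (card3' _ _ _) 1

theorem gammaKR_C9_uniform_closed (k n : ℕ) (hk : 2 < k) (hn : 4 ≤ n) :
    (5 * gammaKR (cylGrid 9 n) k : ℤ) ≤
      9 * (n : ℤ) * (k : ℤ) + 81 * (n : ℤ) + 6 * (k : ℤ) - 6 := by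
  set c4 : ℕ := (k + 8) / 5 with hc4def
  set c3 : ℕ := (k + 6 - c4) / 3 with hc3def
  have h1 : k + 4 ≤ 5 * c4 := by omega
  have h2 : 5 * c4 ≤ k + 8 := by omega
  have hc43 : c4 ≤ c3 := by omega
  have h3 : k + 4 ≤ 3 * c3 + c4 := by omega
  have h90 : 90 * c3 ≤ 24 * k + 156 := by omega
  have hc4pos : 2 ≤ c4 := by omega
  have hc3k : c3 ≤ k + 1 := by omega
  set g : Fin n → ℕ := fun j => if j.val = 0 ∨ j.val = n - 1 then c3 else c4 with hgdef
  set f : Fin 9 × Fin n → ℕ := fun v => g v.2 with hfdef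
  have hgc4 : ∀ j, c4 ≤ g j := by
    intro j; simp only [hgdef]; split <;> omega
  have hgc3 : ∀ j, g j ≤ c3 := by
    intro j; simp only [hgdef]; split <;> omega
  have hfpos : ∀ u : Fin 9 × Fin n, 0 < f u := fun u => lt_of_lt_of_le (by omega) (hgc4 u.2)
  have f1 : ∀ x : Fin 9, x + 1 ≠ x - 1 := by decide
  have f2 : ∀ x : Fin 9, x + 1 ≠ x := by decide
  have f3 : ∀ x : Fin 9, x - 1 ≠ x := by decide
  have hRDF : IsKRomanDF (cylGrid 9 n) k f := by
    constructor
    · intro v; exact le_trans (hgc3 v.2) hc3k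
    · rintro ⟨i, j⟩ hv
      have hfilter : (Finset.univ.filter fun u => (cylGrid 9 n).Adj (i, j) u ∧ 0 < f u)
          = Finset.univ.filter fun u => (cylGrid 9 n).Adj (i, j) u := by
        apply filter_congr
        intro u _
        simp [hfpos u]
      rw [hfilter]
      by_cases hj0 : j.val = 0
      · -- first column
        have hjn : (1 : ℕ) < n := by omega
        set jp : Fin n := ⟨1, hjn⟩ with hjp
        have hjpv : jp.val = 1 := rfl
        have hS : (Finset.univ.filter fun u => (cylGrid 9 n).Adj (i, j) u)
            = {(i + 1, j), (i - 1, j), (i, jp)} := by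
          ext ⟨a, b⟩
          simp only [mem_filter, mem_univ, true_and, cyl9_adj_iff, mem_insert, mem_singleton,
            Prod.mk.injEq]
          have e1 : b = jp ↔ b.val = 1 := by rw [Fin.ext_iff, hjpv]
          have e2 : b = j ↔ b.val = j.val := Fin.ext_iff
          constructor
          · rintro (⟨ha, hb⟩ | ⟨hb | hb, ha⟩)
            · exact Or.imp (fun h => ⟨h, hb⟩) (fun h => Or.inl ⟨h, hb⟩) ha
            · exact Or.inr (Or.inr ⟨ha, by rw [e1]; omega⟩)
            · omega
          · rintro (⟨ha, hb⟩ | ⟨ha, hb⟩ | ⟨ha, hb⟩)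
            · exact Or.inl ⟨Or.inl ha, hb⟩
            · exact Or.inl ⟨Or.inr ha, hb⟩
            · refine Or.inr ⟨Or.inl ?_, ha⟩
              rw [e1] at hb; omega
        have hm1 : ((i + 1 : Fin 9), j) ∉ ({(i - 1, j), (i, jp)} : Finset (Fin 9 × Fin n)) := by
          simp [Prod.ext_iff, f1 i, f2 i]
        have hm2 : ((i - 1 : Fin 9), j) ∉ ({(i, jp)} : Finset (Fin 9 × Fin n)) := by
          simp [Prod.ext_iff, f3 i]
        rw [hS, sum_insert hm1, sum_insert hm2, sum_singleton]
        have hgj : g j = c3 := by simp only [hgdef]; split <;> omega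
        have hgjp : g jp = c4 := by simp only [hgdef]; split <;> omega
        refine le_trans (Nat.add_le_add_left (card3' _ _ _) k) ?_
        simp only [hfdef]
        omega
      · by_cases hj1 : j.val = n - 1
        · -- last column
          have hjn : n - 2 < n := by omega
          set jm : Fin n := ⟨n - 2, hjn⟩ with hjm
          have hjmv : jm.val = n - 2 := rfl
          have hS : (Finset.univ.filter fun u => (cylGrid 9 n).Adj (i, j) u)
              = {(i + 1, j), (i - 1, j), (i, jm)} := by
            ext ⟨a, b⟩
            simp only [mem_filter, mem_univ, true_and, cyl9_adj_iff, mem_insert, mem_singleton,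
              Prod.mk.injEq]
            have e1 : b = jm ↔ b.val = n - 2 := by rw [Fin.ext_iff, hjmv]
            have e2 : b = j ↔ b.val = j.val := Fin.ext_iff
            have hb2 : b.val < n := b.isLt
            constructor
            · rintro (⟨ha, hb⟩ | ⟨hb | hb, ha⟩)
              · exact Or.imp (fun h => ⟨h, hb⟩) (fun h => Or.inl ⟨h, hb⟩) ha
              · omega
              · exact Or.inr (Or.inr ⟨ha, by rw [e1]; omega⟩)
            · rintro (⟨ha, hb⟩ | ⟨ha, hb⟩ | ⟨ha, hb⟩)
              · exact Or.inl ⟨Or.inl ha, hb⟩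
              · exact Or.inl ⟨Or.inr ha, hb⟩
              · refine Or.inr ⟨Or.inr ?_, ha⟩
                rw [e1] at hb; omega
          have hm1 : ((i + 1 : Fin 9), j) ∉ ({(i - 1, j), (i, jm)} : Finset (Fin 9 × Fin n)) := by
            simp [Prod.ext_iff, f1 i, f2 i]
          have hm2 : ((i - 1 : Fin 9), j) ∉ ({(i, jm)} : Finset (Fin 9 × Fin n)) := by
            simp [Prod.ext_iff, f3 i]
          rw [hS, sum_insert hm1, sum_insert hm2, sum_singleton]
          have hgj : g j = c3 := by simp only [hgdef]; split <;> omega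
          have hgjm : g jm = c4 := by simp only [hgdef]; split <;> omega
          refine le_trans (Nat.add_le_add_left (card3' _ _ _) k) ?_
          simp only [hfdef]
          omega
        · -- interior column
          have hjlt : j.val < n := j.isLt
          have hjpn : j.val + 1 < n := by omega
          have hjmn : j.val - 1 < n := by omega
          set jp : Fin n := ⟨j.val + 1, hjpn⟩ with hjp
          set jm : Fin n := ⟨j.val - 1, hjmn⟩ with hjm
          have hjpv : jp.val = j.val + 1 := rfl
          have hjmv : jm.val = j.val - 1 := rfl
          have hso : (Finset.univ.filter fun u => (cylGrid 9 n).Adj (i, j) u)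
              = {(i + 1, j), (i - 1, j), (i, jp), (i, jm)} := by
            ext ⟨a, b⟩
            simp only [mem_filter, mem_univ, true_and, cyl9_adj_iff, mem_insert, mem_singleton,
              Prod.mk.injEq]
            have e1 : b = jp ↔ b.val = j.val + 1 := by rw [Fin.ext_iff, hjpv]
            have e2 : b = jm ↔ b.val = j.val - 1 := by rw [Fin.ext_iff, hjmv]
            constructor
            · rintro (⟨ha, hb⟩ | ⟨hb | hb, ha⟩)
              · exact Or.imp (fun h => ⟨h, hb⟩) (fun h => Or.inl ⟨h, hb⟩) ha
              · exact Or.inr (Or.inr (Or.inl ⟨ha, by rw [e1]; omega⟩))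
              · exact Or.inr (Or.inr (Or.inr ⟨ha, by rw [e2]; omega⟩))
            · rintro (⟨ha, hb⟩ | ⟨ha, hb⟩ | ⟨ha, hb⟩ | ⟨ha, hb⟩)
              · exact Or.inl ⟨Or.inl ha, hb⟩
              · exact Or.inl ⟨Or.inr ha, hb⟩
              · refine Or.inr ⟨Or.inl ?_, ha⟩; rw [e1] at hb; omega
              · refine Or.inr ⟨Or.inr ?_, ha⟩; rw [e2] at hb; omega
          have hjpm : jp ≠ jm := by
            simp only [ne_eq, Fin.ext_iff, hjpv, hjmv]; omega
          have hm1 : ((i + 1 : Fin 9), j) ∉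
              ({(i - 1, j), (i, jp), (i, jm)} : Finset (Fin 9 × Fin n)) := by
            simp [Prod.ext_iff, f1 i, f2 i]
          have hm2 : ((i - 1 : Fin 9), j) ∉ ({(i, jp), (i, jm)} : Finset (Fin 9 × Fin n)) := by
            simp [Prod.ext_iff, f3 i]
          have hm3 : ((i : Fin 9), jp) ∉ ({(i, jm)} : Finset (Fin 9 × Fin n)) := by
            simp [Prod.ext_iff, hjpm]
          rw [hso, sum_insert hm1, sum_insert hm2, sum_insert hm3, sum_singleton]
          have hgj : g j = c4 := by simp only [hgdef]; split <;> omega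
          have e3 : c4 ≤ g jp := hgc4 jp
          have e4 : c4 ≤ g jm := hgc4 jm
          refine le_trans (Nat.add_le_add_left (card4' _ _ _ _) k) ?_
          simp only [hfdef]
          omega
  -- total weight
  have hsum : ∑ v : Fin 9 × Fin n, f v = 9 * (n * c4 + 2 * (c3 - c4)) := by
    rw [Fintype.sum_prod_type]
    have hinner : ∑ j : Fin n, g j = n * c4 + 2 * (c3 - c4) := by
      have hsplit : ∀ j : Fin n, g j = c4 + (if j.val = 0 ∨ j.val = n - 1 then c3 - c4 else 0) := by
        intro j; simp only [hgdef]; split <;> omega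
      rw [Finset.sum_congr rfl fun j _ => hsplit j, Finset.sum_add_distrib]
      have hP : (Finset.univ.filter fun j : Fin n => j.val = 0 ∨ j.val = n - 1)
          = {⟨0, by omega⟩, ⟨n - 1, by omega⟩} := by
        ext j
        simp only [mem_filter, mem_univ, true_and, mem_insert, mem_singleton, Fin.ext_iff]
        try omega
      have hcard2 : (Finset.univ.filter fun j : Fin n => j.val = 0 ∨ j.val = n - 1).card = 2 := by
        rw [hP, card_pair]
        simp only [ne_eq, Fin.mk.injEq]; omega
      rw [← Finset.sum_filter]
      simp only [Finset.sum_const, hcard2, card_univ, Fintype.card_fin, smul_eq_mul]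
    rw [Finset.sum_congr rfl fun i _ => hinner]
    simp only [Finset.sum_const, card_univ, Fintype.card_fin, smul_eq_mul]
  have hle : gammaKR (cylGrid 9 n) k ≤ 9 * (n * c4 + 2 * (c3 - c4)) :=
    Nat.sInf_le ⟨f, hRDF, hsum.symm⟩
  have hleZ : (gammaKR (cylGrid 9 n) k : ℤ) ≤ 9 * ((n : ℤ) * c4 + 2 * ((c3 : ℤ) - c4)) := by
    calc (gammaKR (cylGrid 9 n) k : ℤ) ≤ ((9 * (n * c4 + 2 * (c3 - c4)) : ℕ) : ℤ) := by
          exact_mod_cast hle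
      _ = 9 * ((n : ℤ) * c4 + 2 * ((c3 : ℤ) - c4)) := by
          push_cast [Nat.cast_sub hc43]; ring
  have h2' : (5 : ℤ) * c4 ≤ (k : ℤ) + 8 := by exact_mod_cast h2
  have h90' : (90 : ℤ) * c3 ≤ 24 * (k : ℤ) + 156 := by exact_mod_cast h90
  have hn' : (4 : ℤ) ≤ n := by exact_mod_cast hn
  have key : 9 * ((n : ℤ) - 2) * (5 * c4) ≤ 9 * ((n : ℤ) - 2) * ((k : ℤ) + 8) := by
    apply mul_le_mul_of_nonneg_left h2'
    linarith
  nlinarith [key, h90', hn', hleZ]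
end

section
/- Let n ≥ 4. The packing number of C_9 □ P_n equals 2n − ⌊n/3⌋, i.e., ρ(C_9 □ P_n) = 2n − ⌊n/3⌋. -/
open Finset
open scoped Classical
set_option maxRecDepth 40000

attribute [-instance] Classical.propDecidable

def cdist (a b : Fin 9) : ℕ := min (a - b).val (b - a).val
def rowAdj (a b : Fin 9) : Prop := (a - b).val = 1 ∨ (b - a).val = 1
instance (a b : Fin 9) : Decidable (rowAdj a b) := by unfold rowAdj; infer_instance
variable {n : ℕ}
def colAdj (i j : Fin n) : Prop := i.val + 1 = j.val ∨ j.val + 1 = i.val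

theorem cyl_adj {u v : Fin 9 × Fin n} :
    (cylGrid 9 n).Adj u v ↔ (rowAdj u.1 v.1 ∧ u.2 = v.2) ∨ (colAdj u.2 v.2 ∧ u.1 = v.1) := by
  show (SimpleGraph.cycleGraph 9).Adj u.1 v.1 ∧ u.2 = v.2 ∨ (SimpleGraph.pathGraph n).Adj u.2 v.2 ∧ u.1 = v.1
    ↔ _
  rw [SimpleGraph.cycleGraph_adj', SimpleGraph.pathGraph_adj]
  rfl

theorem mem_cn {u w : Fin 9 × Fin n} :
    w ∈ insert u ((cylGrid 9 n).neighborSet u) ↔ w = u ∨ (cylGrid 9 n).Adj u w := by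
  simp [Set.mem_insert_iff, SimpleGraph.mem_neighborSet]

-- row facts by decide
theorem rf_adj_cdist {a b : Fin 9} (h : rowAdj a b) : cdist a b = 1 := by revert h; revert a b; decide
theorem rf_tri : ∀ a b c : Fin 9, cdist a c ≤ cdist a b + cdist b c := by decide
theorem rf_symm : ∀ a b : Fin 9, cdist a b = cdist b a := by decide
theorem rf_self : ∀ a : Fin 9, cdist a a = 0 := by decide

theorem far_of {u v : Fin 9 × Fin n} (hne : u ≠ v)
    (C0 : u.2 = v.2 → 3 ≤ cdist u.1 v.1)
    (C1 : colAdj u.2 v.2 → 2 ≤ cdist u.1 v.1)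
    (C2 : u.2.val + 2 = v.2.val ∨ v.2.val + 2 = u.2.val → u.1 ≠ v.1) :
    Disjoint (insert u ((cylGrid 9 n).neighborSet u)) (insert v ((cylGrid 9 n).neighborSet v)) := by
  rw [Set.disjoint_left]
  rintro w hwu hwv
  rw [mem_cn] at hwu hwv
  obtain ⟨a, i⟩ := u; obtain ⟨b, j⟩ := v; obtain ⟨x, k⟩ := w
  rcases hwu with h1 | h1 <;> rcases hwv with h2 | h2
  · exact hne (h1.symm.trans h2)
  · rw [cyl_adj] at h2
    obtain ⟨hx, hk⟩ := Prod.ext_iff.mp h1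
    rcases h2 with ⟨hr, hc⟩ | ⟨hc, hr⟩
    · -- same column, rowAdj b x, x = a
      subst hx; subst hk
      have := C0 (by simpa using hc.symm)
      have := rf_adj_cdist hr
      simp only at *
      rw [rf_symm] at this
      omega
    · subst hx; subst hk; simp only at *
      have := C1 (by rcases hc with h | h <;> [right; left] <;> simpa using h)
      rw [hr, rf_self] at this; omega
  · rw [cyl_adj] at h1
    obtain ⟨hx, hk⟩ := Prod.ext_iff.mp h2
    rcases h1 with ⟨hr, hc⟩ | ⟨hc, hr⟩
    · subst hx; subst hk
      have := C0 (by simpa using hc)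
      have := rf_adj_cdist hr
      simp only at *
      omega
    · subst hx; subst hk; simp only at *
      have := C1 (by rcases hc with h | h <;> [left; right] <;> simpa using h)
      rw [← hr, rf_self] at this; omega
  · rw [cyl_adj] at h1 h2
    simp only at *
    rcases h1 with ⟨hr1, hc1⟩ | ⟨hc1, hr1⟩ <;> rcases h2 with ⟨hr2, hc2⟩ | ⟨hc2, hr2⟩
    · -- both row-adjacent, i = k = j
      have hcol : i = j := hc1.trans hc2.symm
      have := C0 hcol
      have t1 := rf_adj_cdist hr1
      have t2 := rf_adj_cdist hr2
      have := rf_tri a x b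
      rw [rf_symm x b] at this
      omega
    · -- u row-adj in col i=k, v col-adj with b = x
      have := C1 (by subst hc1; unfold colAdj at hc2 ⊢; omega)
      have h5 := rf_adj_cdist hr1
      have h6 : cdist a b = 1 := by rw [hr2]; exact h5
      omega
    · have := C1 (by subst hc2; unfold colAdj at hc1 ⊢; omega)
      have h5 := rf_adj_cdist hr2
      have h6 : cdist a b = 1 := by rw [rf_symm a b, hr1]; exact h5
      omega
    · -- both col-adjacent, a = x = b
      have hab : a = b := hr1.trans hr2.symm
      unfold colAdj at hc1 hc2
      have : i = j ∨ (i.val + 2 = j.val ∨ j.val + 2 = i.val) := by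
        rcases hc1 with h | h <;> rcases hc2 with h' | h' <;>
          first
          | (left; exact Fin.ext (by omega))
          | (right; omega)
      rcases this with h | h
      · have := C0 h; rw [hab, rf_self] at this; omega
      · exact C2 h hab

theorem rf_mid : ∀ a b : Fin 9, cdist a b ≤ 2 →
    ∃ m, (m = a ∨ rowAdj a m) ∧ (m = b ∨ rowAdj b m) := by decide
theorem rf_close : ∀ a b : Fin 9, cdist a b ≤ 1 → a = b ∨ rowAdj b a := by decide

/-- helper: membership of witness -/
theorem mem_cn_of {u w : Fin 9 × Fin n}
    (h : w = u ∨ (cylGrid 9 n).Adj u w) : w ∈ insert u ((cylGrid 9 n).neighborSet u) :=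
  mem_cn.mpr h

theorem up0 {u v : Fin 9 × Fin n} (hne : u ≠ v) (hcol : u.2 = v.2)
    (hd : Disjoint (insert u ((cylGrid 9 n).neighborSet u))
      (insert v ((cylGrid 9 n).neighborSet v))) : 3 ≤ cdist u.1 v.1 := by
  by_contra hlt
  obtain ⟨m, hm1, hm2⟩ := rf_mid u.1 v.1 (by omega)
  have hw1 : (m, u.2) ∈ insert u ((cylGrid 9 n).neighborSet u) := by
    apply mem_cn_of
    rcases hm1 with h | h
    · left; rw [h]
    · right; rw [cyl_adj]; left; exact ⟨h, rfl⟩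
  have hw2 : (m, u.2) ∈ insert v ((cylGrid 9 n).neighborSet v) := by
    apply mem_cn_of
    rcases hm2 with h | h
    · left; rw [h, hcol]
    · right; rw [cyl_adj]; left; exact ⟨h, hcol.symm⟩
  exact Set.disjoint_left.mp hd hw1 hw2

theorem up1 {u v : Fin 9 × Fin n} (hcol : u.2.val + 1 = v.2.val)
    (hd : Disjoint (insert u ((cylGrid 9 n).neighborSet u))
      (insert v ((cylGrid 9 n).neighborSet v))) : 2 ≤ cdist u.1 v.1 := by
  by_contra hlt
  have hcl := rf_close u.1 v.1 (by omega)
  have hw1 : (u.1, v.2) ∈ insert u ((cylGrid 9 n).neighborSet u) := by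
    apply mem_cn_of; right; rw [cyl_adj]; right
    exact ⟨Or.inl hcol, rfl⟩
  have hw2 : (u.1, v.2) ∈ insert v ((cylGrid 9 n).neighborSet v) := by
    apply mem_cn_of
    rcases hcl with h | h
    · left; rw [h]
    · right; rw [cyl_adj]; left; exact ⟨h, rfl⟩
  exact Set.disjoint_left.mp hd hw1 hw2

theorem up2 {u v : Fin 9 × Fin n} (hcol : u.2.val + 2 = v.2.val)
    (hd : Disjoint (insert u ((cylGrid 9 n).neighborSet u))
      (insert v ((cylGrid 9 n).neighborSet v))) : u.1 ≠ v.1 := by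
  intro heq
  have hmid : u.2.val + 1 < n := by have := v.2.isLt; omega
  have hw1 : (u.1, (⟨u.2.val + 1, hmid⟩ : Fin n)) ∈ insert u ((cylGrid 9 n).neighborSet u) := by
    apply mem_cn_of; right; rw [cyl_adj]; right
    exact ⟨Or.inl rfl, rfl⟩
  have hw2 : (u.1, (⟨u.2.val + 1, hmid⟩ : Fin n)) ∈ insert v ((cylGrid 9 n).neighborSet v) := by
    apply mem_cn_of; right; rw [cyl_adj]; right
    refine ⟨Or.inr ?_, heq.symm⟩
    simp; omega
  exact Set.disjoint_left.mp hd hw1 hw2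

/-- columns of a closed-neighborhood member are within 1 -/
theorem cn_col {u w : Fin 9 × Fin n}
    (h : w ∈ insert u ((cylGrid 9 n).neighborSet u)) :
    w.2.val ≤ u.2.val + 1 ∧ u.2.val ≤ w.2.val + 1 := by
  rw [mem_cn] at h
  rcases h with h | h
  · rw [h]; omega
  · rw [cyl_adj] at h
    rcases h with ⟨_, hc⟩ | ⟨hc, _⟩
    · rw [hc]; omega
    · unfold colAdj at hc; omega

theorem far_gap {u v : Fin 9 × Fin n} (h : u.2.val + 3 ≤ v.2.val ∨ v.2.val + 3 ≤ u.2.val) :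
    Disjoint (insert u ((cylGrid 9 n).neighborSet u)) (insert v ((cylGrid 9 n).neighborSet v)) := by
  rw [Set.disjoint_left]
  intro w hw1 hw2
  have := cn_col hw1
  have := cn_col hw2
  omega

def patcol : ℕ → List ℕ
  | 0 => [0,5] | 1 => [3,7] | 2 => [1]
  | 3 => [8,4] | 4 => [2,6] | 5 => [0]
  | 6 => [7,3] | 7 => [1,5] | 8 => [8]
  | 9 => [6,2] | 10 => [0,4] | 11 => [7]
  | 12 => [5,1] | 13 => [8,3] | 14 => [6]
  | 15 => [4,0] | 16 => [7,2] | 17 => [5]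
  | 18 => [3,8] | 19 => [6,1] | 20 => [4]
  | 21 => [2,7] | 22 => [5,0] | 23 => [3]
  | 24 => [1,6] | 25 => [4,8] | 26 => [2]
  | _ => []
theorem patFact0 : ∀ (jm : Fin 27) (r r' : Fin 9),
    r.val ∈ patcol jm.val → r'.val ∈ patcol jm.val → r = r' ∨ 3 ≤ cdist r r' := by decide
theorem patFact1 : ∀ (jm : Fin 27) (r r' : Fin 9),
    r.val ∈ patcol jm.val → r'.val ∈ patcol ((jm.val + 1) % 27) → 2 ≤ cdist r r' := by decide
theorem patFact2 : ∀ (jm : Fin 27) (r r' : Fin 9),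
    r.val ∈ patcol jm.val → r'.val ∈ patcol ((jm.val + 2) % 27) → r ≠ r' := by decide
theorem patLen : ∀ jm : Fin 27,
    ((Finset.univ : Finset (Fin 9)).filter (fun r => r.val ∈ patcol jm.val)).card
      = if jm.val % 3 = 2 then 1 else 2 := by decide

/-- the asymmetric pattern fact, lifted to natural column indices -/
theorem patFactNat {d : ℕ} (hd : d ≤ 2) (j j' : ℕ) (hj : j + d = j') (r r' : Fin 9)
    (h1 : r.val ∈ patcol (j % 27)) (h2 : r'.val ∈ patcol (j' % 27)) :
    (d = 0 → r = r' ∨ 3 ≤ cdist r r') ∧ (d = 1 → 2 ≤ cdist r r') ∧ (d = 2 → r ≠ r') := by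
  have hjm : j % 27 < 27 := Nat.mod_lt _ (by norm_num)
  have hmod : j' % 27 = (j % 27 + d) % 27 := by omega
  refine ⟨?_, ?_, ?_⟩ <;> intro hdv <;> subst hdv
  · have h2' : r'.val ∈ patcol (j % 27) := by
      have : j' % 27 = j % 27 := by omega
      rw [this] at h2; exact h2
    exact patFact0 ⟨j % 27, hjm⟩ r r' h1 h2'
  · exact patFact1 ⟨j % 27, hjm⟩ r r' h1 (by rw [← hmod]; exact h2)
  · exact patFact2 ⟨j % 27, hjm⟩ r r' h1 (by rw [← hmod]; exact h2)

def Dlow (n : ℕ) : Set (Fin 9 × Fin n) := {p | p.1.val ∈ patcol (p.2.val % 27)}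

theorem Dlow_pairwise (n : ℕ) : (Dlow n).Pairwise fun u v =>
    Disjoint (insert u ((cylGrid 9 n).neighborSet u)) (insert v ((cylGrid 9 n).neighborSet v)) := by
  intro u hu v hv hne
  rcases le_or_gt 3 (max u.2.val v.2.val - min u.2.val v.2.val) with hgap | hgap
  · exact far_gap (by omega)
  · -- wlog via symmetric handling: set up d
    rcases le_total u.2.val v.2.val with hle | hle
    · set d := v.2.val - u.2.val with hd
      have hd2 : d ≤ 2 := by omega
      have hjj : u.2.val + d = v.2.val := by omega
      obtain ⟨f0, f1, f2⟩ := patFactNat hd2 _ _ hjj u.1 v.1 hu hv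
      apply far_of hne
      · intro hc
        have hv2 : u.2.val = v.2.val := by rw [hc]
        have : d = 0 := by omega
        rcases f0 this with h | h
        · exfalso; exact hne (Prod.ext h hc)
        · exact h
      · intro hc; unfold colAdj at hc
        exact f1 (by omega)
      · intro hc; exact f2 (by omega)
    · set d := u.2.val - v.2.val with hd
      have hd2 : d ≤ 2 := by omega
      have hjj : v.2.val + d = u.2.val := by omega
      obtain ⟨f0, f1, f2⟩ := patFactNat hd2 _ _ hjj v.1 u.1 hv hu
      apply far_of hne
      · intro hc
        have hv2 : u.2.val = v.2.val := by rw [hc]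
        have hd0 : d = 0 := by omega
        rcases f0 hd0 with h | h
        · exfalso; exact hne (Prod.ext h.symm hc)
        · rw [rf_symm]; exact h
      · intro hc; unfold colAdj at hc
        rw [rf_symm]; exact f1 (by omega)
      · intro hc
        exact fun h => f2 (by omega) h.symm

theorem sumw : ∀ m : ℕ, (∑ j ∈ Finset.range m, if j % 3 = 2 then 1 else 2) = 2 * m - m / 3 := by
  intro m
  induction m with
  | zero => simp
  | succ m ih =>
    rw [Finset.sum_range_succ, ih]
    by_cases h : m % 3 = 2 <;> simp [h] <;> omega

theorem Dlow_ncard (n : ℕ) : (Dlow n).ncard = 2 * n - n / 3 := by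
  classical
  have hset : Dlow n = ↑(Finset.univ.filter fun p : Fin 9 × Fin n => p.1.val ∈ patcol (p.2.val % 27)) := by
    ext p; simp [Dlow]
  rw [hset, Set.ncard_coe_finset]
  rw [Finset.card_filter]
  rw [← Finset.univ_product_univ, Finset.sum_product]
  rw [Finset.sum_comm]
  have hcol : ∀ j : Fin n, (∑ r : Fin 9, if r.val ∈ patcol (j.val % 27) then 1 else 0)
      = if j.val % 3 = 2 then 1 else 2 := by
    intro j
    have hjm : j.val % 27 < 27 := Nat.mod_lt _ (by norm_num)
    have := patLen ⟨j.val % 27, hjm⟩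
    rw [Finset.card_filter] at this
    simp only at this
    rw [this]
    have : j.val % 27 % 3 = j.val % 3 := by omega
    rw [this]
  rw [Finset.sum_congr rfl (fun j _ => hcol j)]
  rw [Fin.sum_univ_eq_sum_range (fun j => if j % 3 = 2 then 1 else 2)]
  exact sumw n

-- ===== upper bound =====
def l18 : List (Fin 9 × Fin 9) :=
  [(0,3),(0,4),(0,5),(0,6),(1,4),(1,5),(1,6),(1,7),(2,5),(2,6),(2,7),(2,8),
   (3,6),(3,7),(3,8),(4,7),(4,8),(5,8)]
theorem mem_l18 : ∀ a b : Fin 9, 3 ≤ cdist a b → (a,b) ∈ l18 ∨ (b,a) ∈ l18 := by decide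
theorem tripleLemma : ∀ p ∈ l18, ∀ q ∈ l18, ∀ s ∈ l18,
    (2 ≤ cdist p.1 q.1) → (2 ≤ cdist p.1 q.2) → (2 ≤ cdist p.2 q.1) → (2 ≤ cdist p.2 q.2) →
    (2 ≤ cdist q.1 s.1) → (2 ≤ cdist q.1 s.2) → (2 ≤ cdist q.2 s.1) → (2 ≤ cdist q.2 s.2) →
    p.1 = s.1 ∨ p.1 = s.2 ∨ p.2 = s.1 ∨ p.2 = s.2 := by decide
theorem card_le_three : ∀ S : Finset (Fin 9),
    (∀ a ∈ S, ∀ b ∈ S, a ≠ b → 3 ≤ cdist a b) → S.card ≤ 3 := by decide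
theorem three_covers : ∀ a b c t : Fin 9, 3 ≤ cdist a b → 3 ≤ cdist a c → 3 ≤ cdist b c →
    cdist t a ≤ 1 ∨ cdist t b ≤ 1 ∨ cdist t c ≤ 1 := by decide

def bp7 : ℕ → ℕ → ℕ
  | 0,0 => 0 | 0,1 => 3 | 0,2 => 6 | 0,3 => 9
  | 1,0 => 2 | 1,1 => 5 | 1,2 => 8
  | 2,0 => 4 | 2,1 => 7 | 2,2 => 9
  | 3,0 => 5 | _,_ => 0
theorem bp7_le : ∀ a b : Fin 4, bp7 a.val b.val ≤ 9 := by decide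
theorem transIneq : ∀ a b c : Fin 4,
    ((a.val = 3 → b.val = 0) ∧ (b.val = 3 → a.val = 0)) →
    ((b.val = 3 → c.val = 0) ∧ (c.val = 3 → b.val = 0)) →
    ¬(a.val = 2 ∧ b.val = 2 ∧ c.val = 2) →
    bp7 a.val b.val + 3 * c.val ≤ 5 + bp7 b.val c.val := by decide
theorem baseIneq : ∀ a b c d : Fin 4,
    ((a.val = 3 → b.val = 0) ∧ (b.val = 3 → a.val = 0)) →
    ((b.val = 3 → c.val = 0) ∧ (c.val = 3 → b.val = 0)) →
    ((c.val = 3 → d.val = 0) ∧ (d.val = 3 → c.val = 0)) →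
    ¬(a.val = 2 ∧ b.val = 2 ∧ c.val = 2) → ¬(b.val = 2 ∧ c.val = 2 ∧ d.val = 2) →
    3 * (a.val + b.val + c.val + d.val) + 7 ≤ 20 + bp7 c.val d.val := by decide

theorem auto (c : ℕ → ℕ) (K1 : ∀ j, c j ≤ 3)
    (K2 : ∀ j, (c j = 3 → c (j+1) = 0) ∧ (c (j+1) = 3 → c j = 0))
    (K3 : ∀ j, ¬(c j = 2 ∧ c (j+1) = 2 ∧ c (j+2) = 2)) :
    ∀ m, 4 ≤ m → 3 * (∑ j ∈ Finset.range m, c j) + 7 ≤ 5 * m + bp7 (c (m-2)) (c (m-1)) := by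
  intro m
  induction m with
  | zero => omega
  | succ m ih =>
    intro hm
    rcases Nat.lt_or_ge m 4 with hm4 | hm4
    · -- m + 1 = 4
      have hm' : m = 3 := by omega
      subst hm'
      have := baseIneq ⟨c 0, by have := K1 0; omega⟩ ⟨c 1, by have := K1 1; omega⟩
        ⟨c 2, by have := K1 2; omega⟩ ⟨c 3, by have := K1 3; omega⟩
        (K2 0) (K2 1) (K2 2) (K3 0) (K3 1)
      simp only [Finset.sum_range_succ, Finset.sum_range_zero] at *
      norm_num
      omega
    · have hih := ih hm4
      rw [Finset.sum_range_succ]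
      have h1 : m - 2 + 1 = m - 1 := by omega
      have h2 : m - 2 + 2 = m := by omega
      have h3 : m - 1 + 1 = m := by omega
      have hK2a := K2 (m-2); rw [h1] at hK2a
      have hK2b := K2 (m-1); rw [h3] at hK2b
      have hK3 := K3 (m-2); rw [h1, h2] at hK3
      have ht := transIneq ⟨c (m-2), by have := K1 (m-2); omega⟩
        ⟨c (m-1), by have := K1 (m-1); omega⟩ ⟨c m, by have := K1 m; omega⟩
        hK2a hK2b hK3
      have e1 : m + 1 - 2 = m - 1 := by omega
      have e2 : m + 1 - 1 = m := by omega
      rw [e1, e2]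
      simp only at ht hih
      omega

open scoped Classical in
theorem upper {n : ℕ} (hn : 4 ≤ n) (D : Set (Fin 9 × Fin n))
    (hp : D.Pairwise fun u v =>
      Disjoint (insert u ((cylGrid 9 n).neighborSet u)) (insert v ((cylGrid 9 n).neighborSet v))) :
    3 * D.ncard ≤ 5 * n + 2 := by
  classical
  set colD : Fin n → Finset (Fin 9) := fun j => Finset.univ.filter (fun r => (r,j) ∈ D) with hcolD
  have memcol : ∀ (j : Fin n) (r : Fin 9), r ∈ colD j ↔ (r, j) ∈ D := by
    intro j r; simp [hcolD]
  have hvalid : ∀ j : Fin n, ∀ a ∈ colD j, ∀ b ∈ colD j, a ≠ b → 3 ≤ cdist a b := by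
    intro j a ha b hb hab
    have hne : ((a, j) : Fin 9 × Fin n) ≠ (b, j) := fun h => hab (congrArg Prod.fst h)
    exact up0 hne rfl (hp ((memcol j a).mp ha) ((memcol j b).mp hb) hne)
  have hcompat : ∀ (j j' : Fin n), j.val + 1 = j'.val →
      ∀ a ∈ colD j, ∀ b ∈ colD j', 2 ≤ cdist a b := by
    intro j j' hjj a ha b hb
    have hne : ((a, j) : Fin 9 × Fin n) ≠ (b, j') := by
      intro h; have := congrArg Prod.snd h; simp at this; rw [this] at hjj; omega
    exact up1 hjj (hp ((memcol j a).mp ha) ((memcol j' b).mp hb) hne)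
  have hdisj : ∀ (j j' : Fin n), j.val + 2 = j'.val →
      ∀ a, a ∈ colD j → a ∈ colD j' → False := by
    intro j j' hjj a ha ha'
    have hne : ((a, j) : Fin 9 × Fin n) ≠ (a, j') := by
      intro h; have := congrArg Prod.snd h; simp at this; rw [this] at hjj; omega
    exact up2 hjj (hp ((memcol j a).mp ha) ((memcol j' a).mp ha') hne) rfl
  set cfun : ℕ → ℕ := fun j => if h : j < n then (colD ⟨j,h⟩).card else 0 with hcfun
  have cfun_lt : ∀ (j : ℕ) (h : j < n), cfun j = (colD ⟨j,h⟩).card := by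
    intro j h; simp [hcfun, h]
  have cfun_ge : ∀ j : ℕ, n ≤ j → cfun j = 0 := by
    intro j h; simp [hcfun]; omega
  -- pair extraction helper
  have pairExtract : ∀ (j : Fin n), (colD j).card = 2 →
      ∃ p : Fin 9 × Fin 9, p ∈ l18 ∧ p.1 ∈ colD j ∧ p.2 ∈ colD j := by
    intro j hc
    obtain ⟨a, b, hab, heq⟩ := Finset.card_eq_two.mp hc
    have ha : a ∈ colD j := by rw [heq]; simp
    have hb : b ∈ colD j := by rw [heq]; simp
    rcases mem_l18 a b (hvalid j a ha b hb hab) with h | h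
    · exact ⟨(a,b), h, ha, hb⟩
    · exact ⟨(b,a), h, hb, ha⟩
  have K1 : ∀ j, cfun j ≤ 3 := by
    intro j
    rcases Nat.lt_or_ge j n with h | h
    · rw [cfun_lt j h]; exact card_le_three _ (hvalid _)
    · rw [cfun_ge j h]; omega
  have K2core : ∀ (j j' : Fin n), j.val + 1 = j'.val →
      ((colD j).card = 3 → (colD j').card = 0) ∧ ((colD j').card = 3 → (colD j).card = 0) := by
    intro j j' hjj
    constructor
    · intro h3
      obtain ⟨a, b, c, hab, hac, hbc, heq⟩ := Finset.card_eq_three.mp h3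
      have ha : a ∈ colD j := by rw [heq]; simp
      have hb : b ∈ colD j := by rw [heq]; simp
      have hc : c ∈ colD j := by rw [heq]; simp
      rw [Finset.card_eq_zero, Finset.eq_empty_iff_forall_notMem]
      intro r hr
      rcases three_covers a b c r (hvalid j a ha b hb hab) (hvalid j a ha c hc hac)
        (hvalid j b hb c hc hbc) with h | h | h
      · have := hcompat j j' hjj a ha r hr; rw [rf_symm] at this; omega
      · have := hcompat j j' hjj b hb r hr; rw [rf_symm] at this; omega
      · have := hcompat j j' hjj c hc r hr; rw [rf_symm] at this; omega
    · intro h3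
      obtain ⟨a, b, c, hab, hac, hbc, heq⟩ := Finset.card_eq_three.mp h3
      have ha : a ∈ colD j' := by rw [heq]; simp
      have hb : b ∈ colD j' := by rw [heq]; simp
      have hc : c ∈ colD j' := by rw [heq]; simp
      rw [Finset.card_eq_zero, Finset.eq_empty_iff_forall_notMem]
      intro r hr
      rcases three_covers a b c r (hvalid j' a ha b hb hab) (hvalid j' a ha c hc hac)
        (hvalid j' b hb c hc hbc) with h | h | h
      · have := hcompat j j' hjj r hr a ha; omega
      · have := hcompat j j' hjj r hr b hb; omega
      · have := hcompat j j' hjj r hr c hc; omega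
  have K2 : ∀ j, (cfun j = 3 → cfun (j+1) = 0) ∧ (cfun (j+1) = 3 → cfun j = 0) := by
    intro j
    rcases Nat.lt_or_ge (j+1) n with h1 | h1
    · have h0 : j < n := by omega
      have := K2core ⟨j, h0⟩ ⟨j+1, h1⟩ rfl
      rw [cfun_lt j h0, cfun_lt (j+1) h1]
      exact this
    · rcases Nat.lt_or_ge j n with h0 | h0
      · rw [cfun_ge (j+1) h1, cfun_lt j h0]
        constructor
        · intro _; rfl
        · intro h; omega
      · rw [cfun_ge (j+1) h1, cfun_ge j h0]
        constructor <;> (intro h; omega)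
  have K3 : ∀ j, ¬(cfun j = 2 ∧ cfun (j+1) = 2 ∧ cfun (j+2) = 2) := by
    rintro j ⟨h0, h1, h2⟩
    have hj2 : j + 2 < n := by
      by_contra h
      rw [cfun_ge (j+2) (by omega)] at h2; omega
    have hj0 : j < n := by omega
    have hj1 : j + 1 < n := by omega
    rw [cfun_lt j hj0] at h0
    rw [cfun_lt (j+1) hj1] at h1
    rw [cfun_lt (j+2) hj2] at h2
    obtain ⟨p, hp18, hp1, hp2⟩ := pairExtract _ h0
    obtain ⟨q, hq18, hq1, hq2⟩ := pairExtract _ h1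
    obtain ⟨s, hs18, hs1, hs2⟩ := pairExtract _ h2
    have c1 := hcompat ⟨j,hj0⟩ ⟨j+1,hj1⟩ rfl
    have c2 := hcompat ⟨j+1,hj1⟩ ⟨j+2,hj2⟩ rfl
    have hdj := hdisj ⟨j,hj0⟩ ⟨j+2,hj2⟩ rfl
    rcases tripleLemma p hp18 q hq18 s hs18
      (c1 _ hp1 _ hq1) (c1 _ hp1 _ hq2) (c1 _ hp2 _ hq1) (c1 _ hp2 _ hq2)
      (c2 _ hq1 _ hs1) (c2 _ hq1 _ hs2) (c2 _ hq2 _ hs1) (c2 _ hq2 _ hs2) with h | h | h | h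
    · exact hdj p.1 hp1 (h ▸ hs1)
    · exact hdj p.1 hp1 (h ▸ hs2)
    · exact hdj p.2 hp2 (h ▸ hs1)
    · exact hdj p.2 hp2 (h ▸ hs2)
  -- sum identity
  have hsum : D.ncard = ∑ j ∈ Finset.range n, cfun j := by
    rw [Set.ncard_eq_toFinset_card']
    have : D.toFinset = Finset.univ.filter (fun p : Fin 9 × Fin n => p ∈ D) := by
      ext p; simp
    rw [this, Finset.card_filter, ← Finset.univ_product_univ, Finset.sum_product, Finset.sum_comm]
    have : ∀ j : Fin n, (∑ r : Fin 9, if (r, j) ∈ D then 1 else 0) = cfun j.val := by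
      intro j
      rw [cfun_lt j.val j.isLt, ← Finset.card_filter]
    rw [Finset.sum_congr rfl (fun j _ => this j)]
    exact Fin.sum_univ_eq_sum_range (fun j => cfun j) n
  have hauto := auto cfun K1 K2 K3 n hn
  have hle := bp7_le ⟨cfun (n-2), by have := K1 (n-2); omega⟩ ⟨cfun (n-1), by have := K1 (n-1); omega⟩
  simp only at hle
  omega


theorem packingNumber_C9 (n : ℕ) (hn : 4 ≤ n) :
    (packingNumber (cylGrid 9 n) : ℤ) = 2 * (n : ℤ) - ⌊(n : ℚ) / 3⌋ := by
  have hgreat : IsGreatest { w : ℕ | ∃ D : Set (Fin 9 × Fin n),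
      (D.Pairwise fun u v =>
        Disjoint (insert u ((cylGrid 9 n).neighborSet u))
          (insert v ((cylGrid 9 n).neighborSet v))) ∧
      w = D.ncard } (2 * n - n / 3) := by
    constructor
    · exact ⟨Dlow n, Dlow_pairwise n, (Dlow_ncard n).symm⟩
    · rintro w ⟨D, hD, rfl⟩
      have := upper hn D hD
      omega
  have hpn : packingNumber (cylGrid 9 n) = 2 * n - n / 3 := hgreat.csSup_eq
  rw [hpn]
  have hf : ⌊(n : ℚ) / 3⌋ = (n : ℤ) / 3 := by
    have := Rat.floor_intCast_div_natCast (n : ℤ) 3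
    push_cast at this ⊢
    exact this
  rw [hf]
  omega
end

section
/- Let k ≥ 1 and n ≥ 4. Then γ_{[k]R}(C_9 □ P_n) ≤ (27nk + 245n + 18k − 90)/15, i.e., 15·γ_{[k]R}(C_9 □ P_n) ≤ 27nk + 245n + 18k − 90. -/
open Finset
open scoped Classical

def gfun (n c c' : ℕ) : Fin 9 × Fin n → ℕ :=
  fun v => if v.2.val = 0 ∨ v.2.val = n - 1 then c' else c

lemma sum_ge_three {V : Type*} [DecidableEq V] (s : Finset V) (f : V → ℕ) (a b d : V)
    (ha : a ∈ s) (hb : b ∈ s) (hd : d ∈ s) (hab : a ≠ b) (had : a ≠ d) (hbd : b ≠ d) :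
    f a + f b + f d ≤ ∑ u ∈ s, f u := by
  have hsub : ({a, b, d} : Finset V) ⊆ s := by
    intro x hx; simp only [mem_insert, mem_singleton] at hx
    rcases hx with rfl | rfl | rfl <;> assumption
  calc f a + f b + f d = ∑ u ∈ ({a, b, d} : Finset V), f u := by
        rw [Finset.sum_insert (by simp [hab, had]), Finset.sum_insert (by simp [hbd]),
          Finset.sum_singleton]; ring
    _ ≤ ∑ u ∈ s, f u := Finset.sum_le_sum_of_subset hsub

lemma sum_ge_four {V : Type*} [DecidableEq V] (s : Finset V) (f : V → ℕ) (a b d e : V)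
    (ha : a ∈ s) (hb : b ∈ s) (hd : d ∈ s) (he : e ∈ s) (hab : a ≠ b) (had : a ≠ d)
    (hae : a ≠ e) (hbd : b ≠ d) (hbe : b ≠ e) (hde : d ≠ e) :
    f a + f b + f d + f e ≤ ∑ u ∈ s, f u := by
  have hsub : ({a, b, d, e} : Finset V) ⊆ s := by
    intro x hx; simp only [mem_insert, mem_singleton] at hx
    rcases hx with rfl | rfl | rfl | rfl <;> assumption
  calc f a + f b + f d + f e = ∑ u ∈ ({a, b, d, e} : Finset V), f u := by
        rw [Finset.sum_insert (by simp [hab, had, hae]),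
          Finset.sum_insert (by simp [hbd, hbe]), Finset.sum_insert (by simp [hde]),
          Finset.sum_singleton]; ring
    _ ≤ ∑ u ∈ s, f u := Finset.sum_le_sum_of_subset hsub

lemma card_le_three_s6 {V : Type*} [DecidableEq V] (s : Finset V) (a b d : V)
    (h : ∀ x ∈ s, x = a ∨ x = b ∨ x = d) : s.card ≤ 3 := by
  have hs : s ⊆ {a, b, d} := by
    intro x hx; simp only [mem_insert, mem_singleton]; exact h x hx
  calc s.card ≤ ({a,b,d} : Finset V).card := Finset.card_le_card hs
    _ ≤ 3 := (Finset.card_insert_le _ _).trans (Nat.succ_le_succ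
        ((Finset.card_insert_le _ _).trans (by simp)))

lemma card_le_four {V : Type*} [DecidableEq V] (s : Finset V) (a b d e : V)
    (h : ∀ x ∈ s, x = a ∨ x = b ∨ x = d ∨ x = e) : s.card ≤ 4 := by
  have hs : s ⊆ {a, b, d, e} := by
    intro x hx; simp only [mem_insert, mem_singleton]; exact h x hx
  calc s.card ≤ ({a,b,d,e} : Finset V).card := Finset.card_le_card hs
    _ ≤ 4 := (Finset.card_insert_le _ _).trans (Nat.succ_le_succ
        ((Finset.card_insert_le _ _).trans (Nat.succ_le_succ
        ((Finset.card_insert_le _ _).trans (by simp)))))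

lemma cylGrid_adj_iff (n : ℕ) (i : Fin 9) (j : Fin n) (p : Fin 9) (q : Fin n) :
    (cylGrid 9 n).Adj (i, j) (p, q) ↔
    (((i.val + 1) % 9 = p.val ∨ (p.val + 1) % 9 = i.val) ∧ j.val = q.val) ∨
    (i.val = p.val ∧ (j.val + 1 = q.val ∨ q.val + 1 = j.val)) := by
  have h1 := i.isLt; have h2 := p.isLt
  show (SimpleGraph.boxProd _ _).Adj _ _ ↔ _
  rw [SimpleGraph.boxProd_adj, SimpleGraph.cycleGraph_adj', SimpleGraph.pathGraph_adj]
  simp only [Fin.sub_def, Fin.ext_iff]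
  omega

lemma gfun_val_boundary (n c c' : ℕ) (p : Fin 9) (q : Fin n) (h : q.val = 0 ∨ q.val = n - 1) :
    gfun n c c' (p, q) = c' := by simp only [gfun]; rw [if_pos h]

lemma gfun_val_interior (n c c' : ℕ) (p : Fin 9) (q : Fin n)
    (h0 : q.val ≠ 0) (h1 : q.val ≠ n - 1) : gfun n c c' (p, q) = c := by
  simp only [gfun]; rw [if_neg (by omega)]

set_option maxHeartbeats 1000000 in
lemma gfun_isKRDF (n k c c' : ℕ) (hn : 4 ≤ n)
    (h2 : k + 4 ≤ 5 * c) (h3 : k + 3 ≤ 3 * c' + c) (h4 : k + 4 ≤ c' + 4 * c)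
    (hck : c ≤ k + 1) (hc'k : c' ≤ k + 1) :
    IsKRomanDF (cylGrid 9 n) k (gfun n c c') := by
  constructor
  · rintro ⟨p, q⟩
    simp only [gfun]
    split <;> omega
  · rintro ⟨i, j⟩ hv
    have hi := i.isLt
    have hj := j.isLt
    obtain ⟨iP, hiP⟩ : ∃ p : Fin 9, p.val = (i.val + 1) % 9 := ⟨⟨_, by omega⟩, rfl⟩
    obtain ⟨iM, hiM⟩ : ∃ p : Fin 9, p.val = (i.val + 8) % 9 := ⟨⟨_, by omega⟩, rfl⟩
    have hmema : (cylGrid 9 n).Adj (i, j) (iP, j) := by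
      rw [cylGrid_adj_iff]; left; exact ⟨Or.inl hiP.symm, rfl⟩
    have hmemb : (cylGrid 9 n).Adj (i, j) (iM, j) := by
      rw [cylGrid_adj_iff]; left; refine ⟨Or.inr ?_, rfl⟩; omega
    have hab : ((iP, j) : Fin 9 × Fin n) ≠ (iM, j) := by
      simp only [ne_eq, Prod.ext_iff, Fin.ext_iff]; intro h; omega
    by_cases hb : j.val = 0 ∨ j.val = n - 1
    · -- boundary row
      have hfv : gfun n c c' (i, j) = c' := gfun_val_boundary n c c' i j hb
      obtain ⟨j1, hj1⟩ : ∃ j1 : Fin n, j1.val = if j.val = 0 then 1 else n - 2 := by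
        refine ⟨⟨if j.val = 0 then 1 else n - 2, ?_⟩, rfl⟩
        split <;> omega
      have hj1v : (j.val = 0 ∧ j1.val = 1) ∨ (j.val = n - 1 ∧ j1.val = n - 2) := by
        rcases hb with h0 | h0 <;> rw [hj1] <;> [left; right] <;>
          constructor <;> first | exact h0 | (rw [if_pos h0]) | (rw [if_neg (by omega)])
      have hmemd : (cylGrid 9 n).Adj (i, j) (i, j1) := by
        rw [cylGrid_adj_iff]; right; refine ⟨rfl, ?_⟩; omega
      have had : ((iP, j) : Fin 9 × Fin n) ≠ (i, j1) := by
        simp only [ne_eq, Prod.ext_iff, Fin.ext_iff]; intro h; omega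
      have hbd : ((iM, j) : Fin 9 × Fin n) ≠ (i, j1) := by
        simp only [ne_eq, Prod.ext_iff, Fin.ext_iff]; intro h; omega
      have hcard : (Finset.univ.filter fun u =>
          (cylGrid 9 n).Adj (i, j) u ∧ 0 < gfun n c c' u).card ≤ 3 := by
        apply card_le_three_s6 _ (iP, j) (iM, j) (i, j1)
        rintro ⟨x1, x2⟩ hx
        simp only [mem_filter] at hx
        obtain ⟨-, hx, -⟩ := hx
        rw [cylGrid_adj_iff] at hx
        have hx1 := x1.isLt
        simp only [Prod.ext_iff, Fin.ext_iff]
        omega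
      have hsum : gfun n c c' (iP, j) + gfun n c c' (iM, j) + gfun n c c' (i, j1) ≤
          ∑ u ∈ Finset.univ.filter (fun u => (cylGrid 9 n).Adj (i, j) u), gfun n c c' u := by
        apply sum_ge_three _ _ _ _ _ _ _ _ hab had hbd <;>
          simp only [mem_filter, mem_univ, true_and] <;> assumption
      rw [gfun_val_boundary n c c' iP j hb, gfun_val_boundary n c c' iM j hb,
        gfun_val_interior n c c' i j1 (by omega) (by omega)] at hsum
      rw [hfv]
      omega
    · -- interior row
      push_neg at hb
      have hfv : gfun n c c' (i, j) = c := gfun_val_interior n c c' i j hb.1 hb.2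
      have hjlt : j.val < n - 1 := by omega
      have hj0 : 0 < j.val := by omega
      obtain ⟨jm, hjm⟩ : ∃ q : Fin n, q.val = j.val - 1 := ⟨⟨_, by omega⟩, rfl⟩
      obtain ⟨jp, hjp⟩ : ∃ q : Fin n, q.val = j.val + 1 := ⟨⟨_, by omega⟩, rfl⟩
      have hmemd : (cylGrid 9 n).Adj (i, j) (i, jm) := by
        rw [cylGrid_adj_iff]; right; refine ⟨rfl, Or.inr ?_⟩; omega
      have hmeme : (cylGrid 9 n).Adj (i, j) (i, jp) := by
        rw [cylGrid_adj_iff]; right; exact ⟨rfl, Or.inl (by omega)⟩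
      have had : ((iP, j) : Fin 9 × Fin n) ≠ (i, jm) := by
        simp only [ne_eq, Prod.ext_iff, Fin.ext_iff]; intro h; omega
      have hae : ((iP, j) : Fin 9 × Fin n) ≠ (i, jp) := by
        simp only [ne_eq, Prod.ext_iff, Fin.ext_iff]; intro h; omega
      have hbd : ((iM, j) : Fin 9 × Fin n) ≠ (i, jm) := by
        simp only [ne_eq, Prod.ext_iff, Fin.ext_iff]; intro h; omega
      have hbe : ((iM, j) : Fin 9 × Fin n) ≠ (i, jp) := by
        simp only [ne_eq, Prod.ext_iff, Fin.ext_iff]; intro h; omega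
      have hde : ((i, jm) : Fin 9 × Fin n) ≠ (i, jp) := by
        simp only [ne_eq, Prod.ext_iff, Fin.ext_iff]; intro h; omega
      have hcard : (Finset.univ.filter fun u =>
          (cylGrid 9 n).Adj (i, j) u ∧ 0 < gfun n c c' u).card ≤ 4 := by
        apply card_le_four _ (iP, j) (iM, j) (i, jm) (i, jp)
        rintro ⟨x1, x2⟩ hx
        simp only [mem_filter] at hx
        obtain ⟨-, hx, -⟩ := hx
        rw [cylGrid_adj_iff] at hx
        have hx1 := x1.isLt
        simp only [Prod.ext_iff, Fin.ext_iff]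
        omega
      have hsum : gfun n c c' (iP, j) + gfun n c c' (iM, j) +
          gfun n c c' (i, jm) + gfun n c c' (i, jp) ≤
          ∑ u ∈ Finset.univ.filter (fun u => (cylGrid 9 n).Adj (i, j) u), gfun n c c' u := by
        apply sum_ge_four _ _ _ _ _ _ _ _ _ _ hab had hae hbd hbe hde <;>
          simp only [mem_filter, mem_univ, true_and] <;> assumption
      rw [gfun_val_interior n c c' iP j hb.1 hb.2,
        gfun_val_interior n c c' iM j hb.1 hb.2] at hsum
      have hvert : gfun n c c' (i, jm) + gfun n c c' (i, jp) = 2 * c ∨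
          gfun n c c' (i, jm) + gfun n c c' (i, jp) = c + c' := by
        by_cases h1 : j.val = 1
        · rw [gfun_val_boundary n c c' i jm (by omega),
            gfun_val_interior n c c' i jp (by omega) (by omega)]
          right; omega
        · by_cases h2 : j.val = n - 2
          · rw [gfun_val_interior n c c' i jm (by omega) (by omega),
              gfun_val_boundary n c c' i jp (by omega)]
            right; omega
          · rw [gfun_val_interior n c c' i jm (by omega) (by omega),
              gfun_val_interior n c c' i jp (by omega) (by omega)]
            left; omega
      rw [hfv]
      rcases hvert with hv2 | hv2 <;> omega

lemma gfun_sum (n c c' : ℕ) (hn : 4 ≤ n) :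
    ∑ v, gfun n c c' v = 9 * (2 * c' + (n - 2) * c) := by
  have hcard2 : (Finset.univ.filter fun j : Fin n => j.val = 0 ∨ j.val = n - 1).card = 2 := by
    have hfilter : (Finset.univ.filter fun j : Fin n => j.val = 0 ∨ j.val = n - 1) =
        {⟨0, by omega⟩, ⟨n - 1, by omega⟩} := by
      ext x
      simp only [mem_filter, mem_univ, true_and, mem_insert, mem_singleton, Fin.ext_iff]
    rw [hfilter]
    rw [Finset.card_insert_of_notMem (by simp [Fin.ext_iff]; omega), Finset.card_singleton]
  have hcardc : (Finset.univ.filter fun j : Fin n =>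
      ¬(j.val = 0 ∨ j.val = n - 1)).card = n - 2 := by
    have := Finset.card_filter_add_card_filter_not
      (s := (Finset.univ : Finset (Fin n))) (p := fun j : Fin n => j.val = 0 ∨ j.val = n - 1)
    simp only [Finset.card_univ, Fintype.card_fin] at this
    omega
  have hinner : ∀ x : Fin 9, ∑ y : Fin n, gfun n c c' (x, y) = 2 * c' + (n - 2) * c := by
    intro x
    show (∑ y : Fin n, if y.val = 0 ∨ y.val = n - 1 then c' else c) = _
    rw [Finset.sum_ite, Finset.sum_const, Finset.sum_const, hcard2, hcardc,
      smul_eq_mul, smul_eq_mul]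
  rw [Fintype.sum_prod_type]
  rw [Finset.sum_congr rfl (fun x _ => hinner x), Finset.sum_const]
  simp only [Finset.card_univ, Fintype.card_fin, smul_eq_mul]

theorem gammaKR_C9_packing_closed (k n : ℕ) (hk : 1 ≤ k) (hn : 4 ≤ n) :
    (15 * gammaKR (cylGrid 9 n) k : ℤ) ≤
      27 * (n : ℤ) * (k : ℤ) + 245 * (n : ℤ) + 18 * (k : ℤ) - 90 := by
  have hKR : IsKRomanDF (cylGrid 9 n) k (gfun n ((k + 8) / 5) ((k + 5 - (k + 8) / 5) / 3)) := by
    apply gfun_isKRDF n k _ _ hn <;> omega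
  have hwt : gammaKR (cylGrid 9 n) k ≤
      9 * (2 * ((k + 5 - (k + 8) / 5) / 3) + (n - 2) * ((k + 8) / 5)) := by
    rw [← gfun_sum n _ _ hn]
    exact Nat.sInf_le ⟨_, hKR, rfl⟩
  have h1 : 5 * ((k + 8) / 5) ≤ k + 8 := by omega
  have h3 : 15 * ((k + 5 - (k + 8) / 5) / 3) ≤ 4 * k + 21 := by omega
  generalize hC : (k + 8) / 5 = C at *
  generalize hC' : (k + 5 - C) / 3 = C' at *
  have h1' : (5 : ℤ) * C ≤ k + 8 := by exact_mod_cast h1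
  have h3' : (15 : ℤ) * C' ≤ 4 * k + 21 := by exact_mod_cast h3
  have hn' : (4 : ℤ) ≤ n := by exact_mod_cast hn
  have hwt' : (15 * gammaKR (cylGrid 9 n) k : ℤ) ≤
      15 * (9 * (2 * (C' : ℤ) + ((n : ℤ) - 2) * C)) := by
    have h15 := Nat.mul_le_mul_left 15 hwt
    have hcast : (((n - 2 : ℕ)) : ℤ) = (n : ℤ) - 2 := by omega
    calc (15 * gammaKR (cylGrid 9 n) k : ℤ)
        ≤ ((15 * (9 * (2 * C' + (n - 2) * C)) : ℕ) : ℤ) := by exact_mod_cast h15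
      _ = 15 * (9 * (2 * (C' : ℤ) + ((n : ℤ) - 2) * C)) := by push_cast [hcast]; ring
  refine hwt'.trans ?_
  nlinarith [mul_le_mul_of_nonneg_left h1' (by linarith : (0:ℤ) ≤ 27 * ((n:ℤ) - 2)),
    Nat.cast_nonneg (α := ℤ) C, Nat.cast_nonneg (α := ℤ) C']
end

section
/- Let k ≥ 1, t ≥ 1, and n ≥ 2. Then γ_{[k]R}(C_{4t} □ P_n) ≤ tn(k + 1). -/
open Finset
open scoped Classical

/-- auxiliary: the labeling function -/
def bf (k : ℕ) {m n : ℕ} (p : Fin m × Fin n) : ℕ :=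
  if ((p.1 : ℕ) + 2 * (p.2 : ℕ)) % 4 = 0 then k + 1 else 0

lemma count4 (x a t : ℕ) :
    ∑ i ∈ Finset.range (4 * t), (if (i + a) % 4 = 0 then x else 0) = t * x := by
  induction t with
  | zero => simp
  | succ t ih =>
    rw [show 4 * (t + 1) = 4 * t + 1 + 1 + 1 + 1 by ring,
      Finset.sum_range_succ, Finset.sum_range_succ, Finset.sum_range_succ,
      Finset.sum_range_succ, ih]
    have h : a % 4 = 0 ∨ a % 4 = 1 ∨ a % 4 = 2 ∨ a % 4 = 3 := by omega
    rcases h with h | h | h | h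
    · rw [if_pos (by omega), if_neg (by omega), if_neg (by omega), if_neg (by omega)]; ring
    · rw [if_neg (by omega), if_neg (by omega), if_neg (by omega), if_pos (by omega)]; ring
    · rw [if_neg (by omega), if_neg (by omega), if_pos (by omega), if_neg (by omega)]; ring
    · rw [if_neg (by omega), if_pos (by omega), if_neg (by omega), if_neg (by omega)]; ring

lemma bfsum (k t n : ℕ) :
    ∑ p : Fin (4 * t) × Fin n, bf k p = t * n * (k + 1) := by
  rw [Fintype.sum_prod_type_right]
  have : ∀ j : Fin n, ∑ i : Fin (4 * t), bf k (i, j) = t * (k + 1) := by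
    intro j
    have := count4 (k + 1) (2 * (j : ℕ)) t
    rw [← this, ← Fin.sum_univ_eq_sum_range
      (fun i => if (i + 2 * (j : ℕ)) % 4 = 0 then k + 1 else 0)]
    rfl
  simp only [this, Finset.sum_const, Finset.card_univ, Fintype.card_fin, smul_eq_mul]
  ring

lemma exists_active (k t n : ℕ) (ht : 1 ≤ t) (hn : 2 ≤ n) (v : Fin (4 * t) × Fin n)
    (hv : ((v.1 : ℕ) + 2 * (v.2 : ℕ)) % 4 ≠ 0) :
    ∃ u, (cylGrid (4 * t) n).Adj v u ∧ bf k u = k + 1 := by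
  haveI : NeZero (4 * t) := ⟨by omega⟩
  obtain ⟨a, b⟩ := v
  simp only at hv
  have ha : (a : ℕ) < 4 * t := a.isLt
  have hb : (b : ℕ) < n := b.isLt
  have hone : ((1 : Fin (4 * t)) : ℕ) = 1 := by
    rw [Fin.val_one']; exact Nat.mod_eq_of_lt (by omega)
  have hr : ((a : ℕ) + 2 * (b : ℕ)) % 4 = 1 ∨ ((a : ℕ) + 2 * (b : ℕ)) % 4 = 2 ∨
      ((a : ℕ) + 2 * (b : ℕ)) % 4 = 3 := by omega
  rcases hr with hr | hr | hr
  · -- go to a - 1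
    refine ⟨(a - 1, b), ?_, ?_⟩
    · rw [cylGrid, SimpleGraph.boxProd_adj]
      left
      refine ⟨?_, rfl⟩
      rw [SimpleGraph.cycleGraph_adj']
      left
      rw [sub_sub_cancel, hone]
    · have hval : ((a - 1 : Fin (4 * t)) : ℕ) = (4 * t - 1 + (a : ℕ)) % (4 * t) := by
        rw [Fin.sub_def, hone]
      have hval2 : ((a - 1 : Fin (4 * t)) : ℕ) = if (a : ℕ) = 0 then 4 * t - 1 else (a : ℕ) - 1 := by
        rw [hval]
        split_ifs with h0
        · rw [h0, Nat.add_zero]; exact Nat.mod_eq_of_lt (by omega)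
        · rw [show 4 * t - 1 + (a : ℕ) = ((a : ℕ) - 1) + 4 * t by omega,
            Nat.add_mod_right]
          exact Nat.mod_eq_of_lt (by omega)
      rw [bf, if_pos]
      simp only [hval2]
      split_ifs with h0 <;> omega
  · -- go along the path
    rcases Nat.lt_or_ge ((b : ℕ) + 1) n with hb1 | hb1
    · refine ⟨(a, ⟨(b : ℕ) + 1, hb1⟩), ?_, ?_⟩
      · rw [cylGrid, SimpleGraph.boxProd_adj]
        right
        exact ⟨SimpleGraph.pathGraph_adj.mpr (Or.inl rfl), rfl⟩
      · rw [bf, if_pos]; simp only; omega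
    · have hb0 : 1 ≤ (b : ℕ) := by omega
      refine ⟨(a, ⟨(b : ℕ) - 1, by omega⟩), ?_, ?_⟩
      · rw [cylGrid, SimpleGraph.boxProd_adj]
        right
        refine ⟨SimpleGraph.pathGraph_adj.mpr (Or.inr ?_), rfl⟩
        simp only; omega
      · rw [bf, if_pos]; simp only; omega
  · -- go to a + 1
    refine ⟨(a + 1, b), ?_, ?_⟩
    · rw [cylGrid, SimpleGraph.boxProd_adj]
      left
      refine ⟨?_, rfl⟩
      rw [SimpleGraph.cycleGraph_adj']
      right
      rw [add_sub_cancel_left, hone]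
    · have hval : ((a + 1 : Fin (4 * t)) : ℕ) = ((a : ℕ) + 1) % (4 * t) := by
        rw [Fin.add_def, hone]
      have hval2 : ((a + 1 : Fin (4 * t)) : ℕ) =
          if (a : ℕ) + 1 = 4 * t then 0 else (a : ℕ) + 1 := by
        rw [hval]
        split_ifs with h0
        · rw [h0, Nat.mod_self]
        · exact Nat.mod_eq_of_lt (by omega)
      rw [bf, if_pos]
      simp only [hval2]
      split_ifs with h0 <;> omega

theorem gammaKR_C4t (k t n : ℕ) (hk : 1 ≤ k) (ht : 1 ≤ t) (hn : 2 ≤ n) :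
    gammaKR (cylGrid (4 * t) n) k ≤ t * n * (k + 1) := by
  apply Nat.sInf_le
  refine ⟨bf k, ⟨?_, ?_⟩, (bfsum k t n).symm⟩
  · intro v; rw [bf]; split_ifs <;> omega
  · intro v hv
    have hv0 : ((v.1 : ℕ) + 2 * (v.2 : ℕ)) % 4 ≠ 0 := by
      intro h; rw [bf, if_pos h] at hv; omega
    have hbfv : bf k v = 0 := by rw [bf, if_neg hv0]
    obtain ⟨u0, hadj, hfu⟩ := exists_active k t n ht hn v hv0
    set A := Finset.univ.filter fun u => (cylGrid (4 * t) n).Adj v u ∧ 0 < bf k u with hA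
    have hu0A : u0 ∈ A := by
      rw [hA, Finset.mem_filter]
      exact ⟨Finset.mem_univ _, hadj, by omega⟩
    have hcard : 1 ≤ A.card := Finset.card_pos.mpr ⟨u0, hu0A⟩
    have hsumA : ∑ u ∈ A, bf k u = A.card * (k + 1) := by
      rw [Finset.sum_congr rfl (g := fun _ => k + 1) ?_, Finset.sum_const, smul_eq_mul]
      intro u hu
      rw [hA, Finset.mem_filter] at hu
      have := hu.2.2
      rw [bf] at this ⊢
      split_ifs with h
      · rfl
      · rw [if_neg h] at this; omega
    have hsub : A ⊆ Finset.univ.filter fun u => (cylGrid (4 * t) n).Adj v u := by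
      intro u hu
      rw [hA, Finset.mem_filter] at hu
      exact Finset.mem_filter.mpr ⟨Finset.mem_univ _, hu.2.1⟩
    calc k + A.card ≤ A.card * (k + 1) := by nlinarith
      _ = ∑ u ∈ A, bf k u := hsumA.symm
      _ ≤ ∑ u ∈ Finset.univ.filter (fun u => (cylGrid (4 * t) n).Adj v u), bf k u :=
          Finset.sum_le_sum_of_subset hsub
      _ ≤ bf k v + _ := Nat.le_add_left _ _
end

section
/- Let k ≥ 1, t ≥ 1, and n ≥ 2. If n is odd, then γ_{[k]R}(C_{7t} □ P_n) ≤ t((n+1)(k+1) + ((n−1)/2)(k+1) + 2k); if n is even, then γ_{[k]R}(C_{7t} □ P_n) ≤ t(n(k+1) + (n/2)(k+1) + 2k + 1). -/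
open Finset
open scoped Classical

def colF (k n jv x : ℕ) : ℕ :=
  (if (jv % 2 = 0 ∧ (x = 0 ∨ x = 2)) ∨ (jv % 2 = 1 ∧ x = 4) then k+1 else 0)
  + (if jv = 0 ∧ x = 5 then k else 0)
  + (if jv = n-1 ∧ jv % 2 = 0 ∧ 0 < jv ∧ x = 4 then k else 0)
  + (if jv = n-1 ∧ jv % 2 = 1 ∧ x = 0 then k+1 else 0)

def Fdf (k t n : ℕ) (p : Fin (7*t) × Fin n) : ℕ :=
  colF k n p.2.val ((p.1.val + p.2.val / 2) % 7)

lemma colF_le (k n jv x : ℕ) : colF k n jv x ≤ k + 1 := by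
  unfold colF; split_ifs <;> omega

lemma colF_pos (k n jv x : ℕ) (h : 0 < colF k n jv x) : k ≤ colF k n jv x := by
  unfold colF at *; split_ifs at * <;> omega

lemma colF_sum (k n jv : ℕ) : ∑ x ∈ range 7, colF k n jv x =
    (if jv % 2 = 0 then 2*(k+1) else (k+1)) + (if jv = 0 then k else 0)
    + (if jv = n-1 ∧ jv % 2 = 0 ∧ 0 < jv then k else 0)
    + (if jv = n-1 ∧ jv % 2 = 1 then k+1 else 0) := by
  by_cases h1 : jv % 2 = 0 <;> by_cases h2 : jv = 0 <;> by_cases h3 : jv = n - 1 <;>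
    by_cases h4 : 0 < jv <;>
    simp only [colF, Finset.sum_range_succ, Finset.sum_range_zero, h1, h2, h3] <;>
    norm_num <;> first | omega | (split_ifs <;> omega)

lemma sum_shift7 (c : ℕ) (g : ℕ → ℕ) :
    ∑ s ∈ range 7, g ((s + c) % 7) = ∑ r ∈ range 7, g r := by
  apply Finset.sum_nbij' (i := fun s => (s + c) % 7) (j := fun r => (r + 7 - c % 7) % 7)
  · intro a ha; simp only [mem_range] at *; omega
  · intro a ha; simp only [mem_range] at *; omega
  · intro a ha; simp only [mem_range] at *; omega
  · intro a ha; simp only [mem_range] at *; omega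
  · intro a ha; rfl

lemma sum_mod7 (t c : ℕ) (g : ℕ → ℕ) :
    ∑ i : Fin (7*t), g ((i.val + c) % 7) = t * ∑ r ∈ range 7, g r := by
  rw [Fin.sum_univ_eq_sum_range (fun x => g ((x + c) % 7)) (7*t)]
  induction t with
  | zero => simp
  | succ m ih =>
      have h7 : 7 * (m+1) = 7*m + 7 := by ring
      rw [h7, Finset.sum_range_add, ih]
      have : ∑ x ∈ range 7, g ((7*m + x + c) % 7) = ∑ x ∈ range 7, g ((x + c) % 7) := by
        apply Finset.sum_congr rfl
        intro x _
        have : (7*m + x + c) % 7 = (x + c) % 7 := by omega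
        rw [this]
      rw [this, sum_shift7]
      ring


lemma up_nbr (t : ℕ) (ht : 1 ≤ t) (i : Fin (7*t)) :
    ∃ i' : Fin (7*t), (SimpleGraph.cycleGraph (7*t)).Adj i i' ∧
      i'.val % 7 = (i.val + 1) % 7 := by
  haveI : NeZero (7*t) := ⟨by omega⟩
  have hone : ((1 : Fin (7*t)) : ℕ) = 1 := by
    rw [Fin.val_one']; exact Nat.mod_eq_of_lt (by omega)
  refine ⟨i + 1, ?_, ?_⟩
  · rw [SimpleGraph.cycleGraph_adj']
    right
    rw [add_sub_cancel_left, hone]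
  · rw [Fin.add_def]
    simp only [hone]
    rw [Nat.mod_mod_of_dvd _ ⟨t, rfl⟩]

lemma down_nbr (t : ℕ) (ht : 1 ≤ t) (i : Fin (7*t)) :
    ∃ i' : Fin (7*t), (SimpleGraph.cycleGraph (7*t)).Adj i i' ∧
      i'.val % 7 = (i.val + 6) % 7 := by
  haveI : NeZero (7*t) := ⟨by omega⟩
  have hone : ((1 : Fin (7*t)) : ℕ) = 1 := by
    rw [Fin.val_one']; exact Nat.mod_eq_of_lt (by omega)
  refine ⟨i - 1, ?_, ?_⟩
  · rw [SimpleGraph.cycleGraph_adj']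
    left
    rw [sub_sub_cancel, hone]
  · rw [Fin.sub_def]
    simp only [hone]
    rw [Nat.mod_mod_of_dvd _ ⟨t, rfl⟩]
    have : i.val < 7 * t := i.isLt
    omega


lemma colF_eq1 (k n jv x : ℕ)
    (h : (jv % 2 = 0 ∧ (x = 0 ∨ x = 2)) ∨ (jv % 2 = 1 ∧ x = 4) ∨
      (jv = n-1 ∧ jv % 2 = 1 ∧ x = 0)) : colF k n jv x = k + 1 := by
  unfold colF; split_ifs <;> omega

set_option maxHeartbeats 1000000 in
lemma exists_nbr (k t n : ℕ) (hk : 1 ≤ k) (ht : 1 ≤ t) (hn : 2 ≤ n)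
    (v : Fin (7*t) × Fin n) (h : Fdf k t n v = 0) :
    ∃ u, (cylGrid (7*t) n).Adj v u ∧ Fdf k t n u = k + 1 := by
  obtain ⟨i, j⟩ := v
  simp only [Fdf, colF] at h
  have hjlt : j.val < n := j.isLt
  have h1 : ¬((j.val % 2 = 0 ∧ ((i.val + j.val/2) % 7 = 0 ∨ (i.val + j.val/2) % 7 = 2)) ∨
      (j.val % 2 = 1 ∧ (i.val + j.val/2) % 7 = 4)) := by
    intro hc; rw [if_pos hc] at h; omega
  have h2 : ¬(j.val = 0 ∧ (i.val + j.val/2) % 7 = 5) := by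
    intro hc; rw [if_pos hc] at h; omega
  have h3 : ¬(j.val = n-1 ∧ j.val % 2 = 0 ∧ 0 < j.val ∧ (i.val + j.val/2) % 7 = 4) := by
    intro hc; rw [if_pos hc] at h; omega
  have h4 : ¬(j.val = n-1 ∧ j.val % 2 = 1 ∧ (i.val + j.val/2) % 7 = 0) := by
    intro hc; rw [if_pos hc] at h; omega
  by_cases hje : j.val % 2 = 0
  · have hr : (i.val + j.val/2) % 7 = 1 ∨ (i.val + j.val/2) % 7 = 3 ∨
        (i.val + j.val/2) % 7 = 4 ∨ (i.val + j.val/2) % 7 = 5 ∨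
        (i.val + j.val/2) % 7 = 6 := by omega
    rcases hr with hr | hr | hr | hr | hr
    · -- r = 1 : up neighbor, r_u = 2
      obtain ⟨i', hadj, hmod⟩ := up_nbr t ht i
      refine ⟨(i', j), ?_, ?_⟩
      · exact SimpleGraph.boxProd_adj.mpr (Or.inl ⟨hadj, rfl⟩)
      · simp only [Fdf]; exact colF_eq1 k n _ _ (by omega)
    · -- r = 3 : down neighbor, r_u = 2
      obtain ⟨i', hadj, hmod⟩ := down_nbr t ht i
      refine ⟨(i', j), ?_, ?_⟩
      · exact SimpleGraph.boxProd_adj.mpr (Or.inl ⟨hadj, rfl⟩)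
      · simp only [Fdf]; exact colF_eq1 k n _ _ (by omega)
    · -- r = 4 : right neighbor (odd column, r stays 4)
      have hlt : j.val + 1 < n := by omega
      refine ⟨(i, ⟨j.val + 1, hlt⟩), ?_, ?_⟩
      · exact SimpleGraph.boxProd_adj.mpr (Or.inr ⟨SimpleGraph.pathGraph_adj.mpr (Or.inl rfl), rfl⟩)
      · simp only [Fdf]; exact colF_eq1 k n _ _ (by omega)
    · -- r = 5 : left neighbor (odd column, r becomes 4)
      have hj0 : j.val ≠ 0 := by intro hc; exact h2 ⟨hc, hr⟩
      have hlt : j.val - 1 < n := by omega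
      refine ⟨(i, ⟨j.val - 1, hlt⟩), ?_, ?_⟩
      · refine SimpleGraph.boxProd_adj.mpr (Or.inr ⟨SimpleGraph.pathGraph_adj.mpr (Or.inr ?_), rfl⟩)
        simp only []; omega
      · simp only [Fdf]; exact colF_eq1 k n _ _ (by omega)
    · -- r = 6 : up neighbor, r_u = 0
      obtain ⟨i', hadj, hmod⟩ := up_nbr t ht i
      refine ⟨(i', j), ?_, ?_⟩
      · exact SimpleGraph.boxProd_adj.mpr (Or.inl ⟨hadj, rfl⟩)
      · simp only [Fdf]; exact colF_eq1 k n _ _ (by omega)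
  · have hr : (i.val + j.val/2) % 7 = 0 ∨ (i.val + j.val/2) % 7 = 1 ∨
        (i.val + j.val/2) % 7 = 2 ∨ (i.val + j.val/2) % 7 = 3 ∨
        (i.val + j.val/2) % 7 = 5 ∨ (i.val + j.val/2) % 7 = 6 := by omega
    rcases hr with hr | hr | hr | hr | hr | hr
    · -- r = 0 : left neighbor (even column, r stays 0)
      have hlt : j.val - 1 < n := by omega
      refine ⟨(i, ⟨j.val - 1, hlt⟩), ?_, ?_⟩
      · refine SimpleGraph.boxProd_adj.mpr (Or.inr ⟨SimpleGraph.pathGraph_adj.mpr (Or.inr ?_), rfl⟩)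
        simp only []; omega
      · simp only [Fdf]; exact colF_eq1 k n _ _ (by omega)
    · -- r = 1
      by_cases hl : j.val = n - 1
      · -- down neighbor, r_u = 0, cond4
        obtain ⟨i', hadj, hmod⟩ := down_nbr t ht i
        refine ⟨(i', j), ?_, ?_⟩
        · exact SimpleGraph.boxProd_adj.mpr (Or.inl ⟨hadj, rfl⟩)
        · simp only [Fdf]; exact colF_eq1 k n _ _ (by omega)
      · -- right neighbor (even column, r becomes 2)
        have hlt : j.val + 1 < n := by omega
        refine ⟨(i, ⟨j.val + 1, hlt⟩), ?_, ?_⟩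
        · exact SimpleGraph.boxProd_adj.mpr (Or.inr ⟨SimpleGraph.pathGraph_adj.mpr (Or.inl rfl), rfl⟩)
        · simp only [Fdf]; exact colF_eq1 k n _ _ (by omega)
    · -- r = 2 : left neighbor
      have hlt : j.val - 1 < n := by omega
      refine ⟨(i, ⟨j.val - 1, hlt⟩), ?_, ?_⟩
      · refine SimpleGraph.boxProd_adj.mpr (Or.inr ⟨SimpleGraph.pathGraph_adj.mpr (Or.inr ?_), rfl⟩)
        simp only []; omega
      · simp only [Fdf]; exact colF_eq1 k n _ _ (by omega)
    · -- r = 3 : up neighbor, r_u = 4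
      obtain ⟨i', hadj, hmod⟩ := up_nbr t ht i
      refine ⟨(i', j), ?_, ?_⟩
      · exact SimpleGraph.boxProd_adj.mpr (Or.inl ⟨hadj, rfl⟩)
      · simp only [Fdf]; exact colF_eq1 k n _ _ (by omega)
    · -- r = 5 : down neighbor, r_u = 4
      obtain ⟨i', hadj, hmod⟩ := down_nbr t ht i
      refine ⟨(i', j), ?_, ?_⟩
      · exact SimpleGraph.boxProd_adj.mpr (Or.inl ⟨hadj, rfl⟩)
      · simp only [Fdf]; exact colF_eq1 k n _ _ (by omega)
    · -- r = 6
      by_cases hl : j.val = n - 1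
      · -- up neighbor, r_u = 0, cond4
        obtain ⟨i', hadj, hmod⟩ := up_nbr t ht i
        refine ⟨(i', j), ?_, ?_⟩
        · exact SimpleGraph.boxProd_adj.mpr (Or.inl ⟨hadj, rfl⟩)
        · simp only [Fdf]; exact colF_eq1 k n _ _ (by omega)
      · -- right neighbor (even column, r becomes 0)
        have hlt : j.val + 1 < n := by omega
        refine ⟨(i, ⟨j.val + 1, hlt⟩), ?_, ?_⟩
        · exact SimpleGraph.boxProd_adj.mpr (Or.inr ⟨SimpleGraph.pathGraph_adj.mpr (Or.inl rfl), rfl⟩)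
        · simp only [Fdf]; exact colF_eq1 k n _ _ (by omega)

lemma Fdf_le (k t n : ℕ) (p : Fin (7*t) × Fin n) : Fdf k t n p ≤ k + 1 := colF_le _ _ _ _
lemma Fdf_pos (k t n : ℕ) (p : Fin (7*t) × Fin n) (h : 0 < Fdf k t n p) :
    k ≤ Fdf k t n p := colF_pos _ _ _ _ h

lemma isKR (k t n : ℕ) (hk : 1 ≤ k) (ht : 1 ≤ t) (hn : 2 ≤ n) :
    IsKRomanDF (cylGrid (7*t) n) k (Fdf k t n) := by
  constructor
  · intro v; exact Fdf_le k t n v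
  · intro v hv
    have hv0 : Fdf k t n v = 0 := by
      rcases Nat.eq_zero_or_pos (Fdf k t n v) with h | h
      · exact h
      · have := Fdf_pos k t n v h; omega
    obtain ⟨u₀, hadj, hu0⟩ := exists_nbr k t n hk ht hn v hv0
    set A := Finset.univ.filter (fun u => (cylGrid (7*t) n).Adj v u ∧ 0 < Fdf k t n u) with hA
    have hu0A : u₀ ∈ A := by
      rw [hA, Finset.mem_filter]
      exact ⟨Finset.mem_univ _, hadj, by omega⟩
    have hsub : A ⊆ Finset.univ.filter (fun u => (cylGrid (7*t) n).Adj v u) := by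
      intro x hx
      rw [hA, Finset.mem_filter] at hx
      exact Finset.mem_filter.mpr ⟨hx.1, hx.2.1⟩
    have hsum1 : ∑ u ∈ A, Fdf k t n u ≤
        ∑ u ∈ Finset.univ.filter (fun u => (cylGrid (7*t) n).Adj v u), Fdf k t n u :=
      Finset.sum_le_sum_of_subset hsub
    have hsplit : ∑ u ∈ A, Fdf k t n u = Fdf k t n u₀ + ∑ u ∈ A.erase u₀, Fdf k t n u :=
      (Finset.add_sum_erase A _ hu0A).symm
    have hge : (A.erase u₀).card • k ≤ ∑ u ∈ A.erase u₀, Fdf k t n u := by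
      apply Finset.card_nsmul_le_sum
      intro x hx
      have hx' := Finset.mem_of_mem_erase hx
      rw [hA, Finset.mem_filter] at hx'
      exact Fdf_pos k t n x hx'.2.2
    rw [smul_eq_mul] at hge
    have hcard : (A.erase u₀).card = A.card - 1 := Finset.card_erase_of_mem hu0A
    have hcard1 : 1 ≤ A.card := Finset.card_pos.mpr ⟨u₀, hu0A⟩
    have hmul : A.card - 1 ≤ (A.card - 1) * k := Nat.le_mul_of_pos_right _ hk
    rw [hcard] at hge
    omega

lemma parity_sum (a n : ℕ) :
    ∑ x ∈ range n, (if x % 2 = 0 then 2*a else a) = a*n + a*((n+1)/2) := by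
  induction n with
  | zero => simp
  | succ m ih =>
      rw [Finset.sum_range_succ, ih]
      by_cases hm : m % 2 = 0
      · rw [if_pos hm]
        have h2 : (m+1+1)/2 = (m+1)/2 + 1 := by omega
        rw [h2]; ring
      · rw [if_neg hm]
        have h2 : (m+1+1)/2 = (m+1)/2 := by omega
        rw [h2]; ring

lemma total_sum (k t n : ℕ) (hn : 2 ≤ n) :
    ∑ v : Fin (7*t) × Fin n, Fdf k t n v =
      t * (((k+1)*n + (k+1)*((n+1)/2)) + k
        + (if (n-1) % 2 = 0 ∧ 0 < n-1 then k else 0)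
        + (if (n-1) % 2 = 1 then k+1 else 0)) := by
  rw [Fintype.sum_prod_type_right]
  have hcol : ∀ j : Fin n, ∑ i : Fin (7*t), Fdf k t n (i, j) =
      t * ((if j.val % 2 = 0 then 2*(k+1) else (k+1)) + (if j.val = 0 then k else 0)
      + (if j.val = n-1 ∧ j.val % 2 = 0 ∧ 0 < j.val then k else 0)
      + (if j.val = n-1 ∧ j.val % 2 = 1 then k+1 else 0)) := by
    intro j
    have := sum_mod7 t (j.val / 2) (colF k n j.val)
    simp only [Fdf]
    rw [this, colF_sum]
  rw [Finset.sum_congr rfl (fun j _ => hcol j)]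
  rw [Fin.sum_univ_eq_sum_range (fun x => t * ((if x % 2 = 0 then 2*(k+1) else (k+1))
      + (if x = 0 then k else 0)
      + (if x = n-1 ∧ x % 2 = 0 ∧ 0 < x then k else 0)
      + (if x = n-1 ∧ x % 2 = 1 then k+1 else 0))) n]
  rw [← Finset.mul_sum]
  congr 1
  rw [Finset.sum_add_distrib, Finset.sum_add_distrib, Finset.sum_add_distrib]
  congr 1
  · congr 1
    · congr 1
      · exact parity_sum (k+1) n
      · rw [Finset.sum_ite_eq' (range n) 0 (fun _ => k)]
        rw [if_pos (Finset.mem_range.mpr (by omega))]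
    · have : ∀ x, (if x = n-1 ∧ x % 2 = 0 ∧ 0 < x then k else 0)
          = if x = n-1 then (if x % 2 = 0 ∧ 0 < x then k else 0) else 0 := by
        intro x
        exact ite_and (x = n-1) (x % 2 = 0 ∧ 0 < x) k 0
      rw [Finset.sum_congr rfl (fun x _ => this x)]
      rw [Finset.sum_ite_eq' (range n) (n-1) (fun x => if x % 2 = 0 ∧ 0 < x then k else 0)]
      rw [if_pos (Finset.mem_range.mpr (by omega))]
  · have : ∀ x, (if x = n-1 ∧ x % 2 = 1 then k+1 else 0)
        = if x = n-1 then (if x % 2 = 1 then k+1 else 0) else 0 := by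
      intro x
      exact ite_and (x = n-1) (x % 2 = 1) (k+1) 0
    rw [Finset.sum_congr rfl (fun x _ => this x)]
    rw [Finset.sum_ite_eq' (range n) (n-1) (fun x => if x % 2 = 1 then k+1 else 0)]
    rw [if_pos (Finset.mem_range.mpr (by omega))]


theorem gammaKR_C7t (k t n : ℕ) (hk : 1 ≤ k) (ht : 1 ≤ t) (hn : 2 ≤ n) :
    (Odd n →
      gammaKR (cylGrid (7 * t) n) k ≤
        t * ((n + 1) * (k + 1) + ((n - 1) / 2) * (k + 1) + 2 * k)) ∧
    (Even n →
      gammaKR (cylGrid (7 * t) n) k ≤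
        t * (n * (k + 1) + (n / 2) * (k + 1) + 2 * k + 1)) := by
  have hle : gammaKR (cylGrid (7 * t) n) k ≤ ∑ v : Fin (7*t) × Fin n, Fdf k t n v :=
    Nat.sInf_le ⟨Fdf k t n, isKR k t n hk ht hn, rfl⟩
  rw [total_sum k t n hn] at hle
  constructor
  · intro hodd
    obtain ⟨q, hq⟩ := hodd
    have e1 : (n+1)/2 = q + 1 := by omega
    have e2 : (n-1)/2 = q := by omega
    have e3 : (n-1) % 2 = 0 := by omega
    have e4 : 0 < n - 1 := by omega
    have e5 : ¬((n-1) % 2 = 1) := by omega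
    rw [e1, e3, if_pos ⟨rfl, e4⟩, if_neg (by omega)] at hle
    refine le_trans hle (le_of_eq ?_)
    rw [e2, hq]
    ring
  · intro heven
    obtain ⟨q, hq⟩ := heven
    have hq' : n = 2 * q := by omega
    have e1 : (n+1)/2 = q := by omega
    have e2 : n/2 = q := by omega
    have e3 : (n-1) % 2 = 1 := by omega
    rw [e1, e3, if_neg (by omega), if_pos rfl] at hle
    refine le_trans hle (le_of_eq ?_)
    rw [e2, hq']
    ring
end

section
/- Let k ≥ 1, t ≥ 1, and n ≥ 2. Then γ_{[k]R}(C_{8t} □ P_n) ≤ t(2n(k+1) − (⌊(n−2)/5⌋ + ⌊n/5⌋) + 2k). -/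
open Finset
open scoped Classical

/-!
Write `(x, y)` for a vertex of `C_8 □ P_n`, with `x ∈ ℤ/8` and `0 ≤ y < n`, and call
`2x + y + e ∈ ℤ/5` its phase, for an offset `e ∈ ℤ/5`. In the grid `ℤ × ℤ` the vertices of
phase `0` form a perfect code: a vertex of phase `1, 2, 3, 4` has its code neighbour below, to
the left, to the right, above. Labelling the code `k + 1` and every vertex it misses `k` is a
`[k]`-Roman dominating function. On `C_8 □ P_n` the code misses only vertices next to the seam
between `x = 7` and `x = 0` (because `8 ≢ 0 mod 5`) and vertices on the boundary layers `y = 0`,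
`y = n - 1`. Every layer `C_8 × {y}` carries exactly two vertices that are code or seam vertices,
and one of them is a seam vertex (label `k` instead of `k + 1`) whenever `y + e ≡ 2, 4`, which
happens for at least `2⌊n/5⌋` layers; choosing `e` so that neither boundary layer has that phase
leaves at most one missed vertex on each. Finally `x ↦ x mod 8` maps `C_{8t} □ P_n` onto
`C_8 □ P_n` lifting every edge, so the labelling pulls back with its weight multiplied by `t`.
-/

open SimpleGraph

section Domination

variable {V : Type*} [Fintype V]

def DominatesOutside (G : SimpleGraph V) (D P : Finset V) : Prop :=
  ∀ v, v ∉ D → v ∉ P → ∃ u ∈ D, G.Adj v u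

noncomputable def twoLevelLabel (k : ℕ) (D P : Finset V) (v : V) : ℕ :=
  if v ∈ D then k + 1 else if v ∈ P then k else 0

theorem isKRomanDF_twoLevelLabel {G : SimpleGraph V} {D P : Finset V}
    (h : DominatesOutside G D P) (k : ℕ) : IsKRomanDF G k (twoLevelLabel k D P) := by
  set f := twoLevelLabel k D P
  refine ⟨fun v => by simp only [f, twoLevelLabel]; split_ifs <;> omega, fun v hv => ?_⟩
  have hvD : v ∉ D := fun hvD => by simp [f, twoLevelLabel, hvD] at hv
  have hvP : v ∉ P := fun hvP => by simp [f, twoLevelLabel, hvD, hvP] at hv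
  obtain ⟨u, huD, hvu⟩ := h v hvD hvP
  set A := univ.filter fun w => G.Adj v w ∧ 0 < f w
  have huA : u ∈ A := by simp [A, f, twoLevelLabel, hvu, huD]
  have hA : ∀ w ∈ A, k + (if w = u then 1 else 0) ≤ f w := by
    intro w hw
    have hw : 0 < f w := (mem_filter.mp hw).2.2
    simp only [f, twoLevelLabel] at hw ⊢
    split_ifs at hw ⊢ <;> simp_all
  have hk : 1 ≤ k := by omega
  have hA1 : 1 ≤ #A := card_pos.mpr ⟨u, huA⟩
  calc k + #A ≤ k * #A + 1 := by nlinarith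
    _ = ∑ w ∈ A, (k + if w = u then 1 else 0) := by
      rw [sum_add_distrib, sum_const, sum_ite_eq' A u, if_pos huA, smul_eq_mul, mul_comm]
    _ ≤ ∑ w ∈ A, f w := sum_le_sum hA
    _ ≤ ∑ w ∈ univ.filter (fun w => G.Adj v w), f w :=
      sum_le_sum_of_subset fun w hw => by
        simp only [A, mem_filter] at hw ⊢
        exact ⟨hw.1, hw.2.1⟩
    _ ≤ f v + ∑ w ∈ univ.filter (fun w => G.Adj v w), f w := le_add_self

theorem sum_twoLevelLabel_le (k : ℕ) (D P : Finset V) :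
    ∑ v, twoLevelLabel k D P v ≤ (k + 1) * #D + k * #P := by
  calc ∑ v, twoLevelLabel k D P v
      ≤ ∑ v, ((if v ∈ D then k + 1 else 0) + (if v ∈ P then k else 0)) :=
        sum_le_sum fun v _ => by simp only [twoLevelLabel]; split_ifs <;> omega
    _ = (k + 1) * #D + k * #P := by
      rw [sum_add_distrib, sum_ite_mem, sum_ite_mem]
      simp [mul_comm]

theorem gammaKR_le_of_dominatesOutside {G : SimpleGraph V} {D P : Finset V}
    (h : DominatesOutside G D P) (k : ℕ) : gammaKR G k ≤ (k + 1) * #D + k * #P :=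
  calc gammaKR G k ≤ ∑ v, twoLevelLabel k D P v :=
        Nat.sInf_le ⟨_, isKRomanDF_twoLevelLabel h k, rfl⟩
    _ ≤ (k + 1) * #D + k * #P := sum_twoLevelLabel_le k D P

end Domination

section Counting

theorem card_filter_map_mem {V W : Type*} [Fintype V] [DecidableEq W] {φ : V → W} {t : ℕ}
    (hφ : ∀ w, #{v | φ v = w} = t) (S : Finset W) : #{v | φ v ∈ S} = t * #S := by
  rw [card_eq_sum_card_fiberwise (s := {v | φ v ∈ S}) (t := S) fun v hv => (mem_filter.mp hv).2]
  calc ∑ w ∈ S, #{v ∈ {v | φ v ∈ S} | φ v = w} = ∑ _w ∈ S, t :=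
        sum_congr rfl fun w hw => by
          rw [filter_filter, ← hφ w]
          congr 1
          ext v
          simp only [mem_filter, mem_univ, true_and, and_iff_right_iff_imp]
          rintro rfl
          exact hw
    _ = t * #S := by rw [sum_const, smul_eq_mul, mul_comm]

theorem card_filter_prod_eq_sum {α β : Type*} [Fintype α] [Fintype β] (p : α × β → Prop)
    [DecidablePred p] : #{v | p v} = ∑ b, #{a | p (a, b)} := by
  simp only [card_filter, Fintype.sum_prod_type_right]

theorem Fin.card_filter_val_modEq (N m v : ℕ) (hm : 0 < m) :
    #{x : Fin N | x.val ≡ v [MOD m]} = N / m + if v % m < N % m then 1 else 0 := by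
  rw [← Nat.count_modEq_card N hm, Nat.count_eq_card_filter_range, ← Nat.Iio_eq_range,
    ← Fin.map_valEmbedding_univ, filter_map, card_map]
  rfl

theorem card_filter_ofNat_val_eq (m t : ℕ) [NeZero m] (r : Fin m) :
    #{x : Fin (m * t) | Fin.ofNat m x.val = r} = t := by
  have hm : 0 < m := NeZero.pos m
  have h := Fin.card_filter_val_modEq (m * t) m r.val hm
  rw [Nat.mul_mod_right, if_neg (Nat.not_lt_zero _), add_zero, Nat.mul_div_cancel_left t hm] at h
  refine (congrArg card (filter_congr fun x _ => ?_)).trans h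
  simp [Fin.ext_iff, Nat.ModEq, Nat.mod_eq_of_lt r.isLt]

theorem div_le_card_filter_natCast_eq (n m : ℕ) [NeZero m] (a : ZMod m) :
    n / m ≤ #{j : Fin n | (j.val : ZMod m) = a} := by
  calc n / m ≤ #{j : Fin n | j.val ≡ a.val [MOD m]} := by
        rw [Fin.card_filter_val_modEq n m a.val (NeZero.pos m)]
        exact Nat.le_add_right _ _
    _ = #{j : Fin n | (j.val : ZMod m) = a} := congrArg card <| filter_congr fun j _ => by
        rw [← ZMod.natCast_eq_natCast_iff, ZMod.natCast_zmod_val]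

end Counting

section Covering

variable {α β γ δ : Type*}

def LiftsAdj (G : SimpleGraph α) (H : SimpleGraph β) (φ : α → β) : Prop :=
  ∀ v w, H.Adj (φ v) w → ∃ v', G.Adj v v' ∧ φ v' = w

theorem DominatesOutside.comap [Fintype α] [Fintype β] [DecidableEq β] {G : SimpleGraph α}
    {H : SimpleGraph β} {φ : α → β} (hφ : LiftsAdj G H φ) {D P : Finset β}
    (h : DominatesOutside H D P) : DominatesOutside G {v | φ v ∈ D} {v | φ v ∈ P} := by
  intro v hvD hvP
  simp only [mem_filter, mem_univ, true_and] at hvD hvP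
  obtain ⟨w, hwD, hvw⟩ := h (φ v) hvD hvP
  obtain ⟨v', hvv', rfl⟩ := hφ v w hvw
  exact ⟨v', by simpa using hwD, hvv'⟩

theorem liftsAdj_id (G : SimpleGraph α) : LiftsAdj G G id :=
  fun _ w h => ⟨w, h, rfl⟩

theorem LiftsAdj.boxProd {G₁ : SimpleGraph α} {H₁ : SimpleGraph β} {G₂ : SimpleGraph γ}
    {H₂ : SimpleGraph δ} {φ : α → β} {ψ : γ → δ} (hφ : LiftsAdj G₁ H₁ φ)
    (hψ : LiftsAdj G₂ H₂ ψ) : LiftsAdj (G₁ □ G₂) (H₁ □ H₂) (Prod.map φ ψ) := by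
  rintro ⟨a, c⟩ ⟨b, d⟩ h
  rcases boxProd_adj.mp h with ⟨hab, hcd⟩ | ⟨hcd, hab⟩
  · obtain ⟨a', ha', rfl⟩ := hφ a b hab
    exact ⟨(a', c), boxProd_adj.mpr (Or.inl ⟨ha', rfl⟩), Prod.ext rfl hcd⟩
  · obtain ⟨c', hc', rfl⟩ := hψ c d hcd
    exact ⟨(a, c'), boxProd_adj.mpr (Or.inr ⟨hc', rfl⟩), Prod.ext hab rfl⟩

theorem Fin.ofNat_val_add_one {m M : ℕ} [NeZero m] [NeZero M] (hm : m ∣ M) (x : Fin M) :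
    Fin.ofNat m (x + 1).val = Fin.ofNat m x.val + 1 := by
  simp [Fin.ext_iff, Fin.val_add, Nat.mod_mod_of_dvd _ hm, Nat.add_mod]

theorem liftsAdj_cycleGraph_ofNat {m M : ℕ} [NeZero m] (hm : m ∣ M) :
    LiftsAdj (cycleGraph M) (cycleGraph m) (fun x : Fin M => Fin.ofNat m x.val) := by
  intro x w hxw
  obtain _ | _ | m := m
  · exact absurd rfl (NeZero.ne 0)
  · exact absurd hxw cycleGraph_one_adj
  obtain ⟨M, rfl⟩ : ∃ M', M = M' + 2 :=
    ⟨M - 2, by have := Nat.le_of_dvd (Fin.pos x) hm; omega⟩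
  have hsucc := Fin.ofNat_val_add_one hm
  dsimp only at hxw ⊢
  rcases cycleGraph_adj.mp hxw with h | h
  · refine ⟨x - 1, cycleGraph_adj.mpr (Or.inl (sub_sub_cancel x 1)), ?_⟩
    have := hsucc (x - 1)
    rw [sub_add_cancel] at this
    rw [← sub_eq_iff_eq_add.mpr this, sub_eq_iff_eq_add.mp h, add_sub_cancel_left]
  · refine ⟨x + 1, cycleGraph_adj.mpr (Or.inr (add_sub_cancel_left x 1)), ?_⟩
    rw [hsucc, sub_eq_iff_eq_add'.mp h]

theorem gammaKR_cylGrid_mul_le {m : ℕ} [NeZero m] (t n k : ℕ) {D P : Finset (Fin m × Fin n)}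
    (h : DominatesOutside (cylGrid m n) D P) :
    gammaKR (cylGrid (m * t) n) k ≤ t * ((k + 1) * #D + k * #P) := by
  set φ := Prod.map (fun x : Fin (m * t) => Fin.ofNat m x.val) (id : Fin n → Fin n)
  have hlift : LiftsAdj (cylGrid (m * t) n) (cylGrid m n) φ :=
    (liftsAdj_cycleGraph_ofNat (dvd_mul_right m t)).boxProd (liftsAdj_id _)
  have hfiber (w : Fin m × Fin n) : #{v | φ v = w} = t := by
    have hprod : ({v | φ v = w} : Finset _) =
        ({x : Fin (m * t) | Fin.ofNat m x.val = w.1} : Finset _) ×ˢ {w.2} := by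
      ext ⟨x, j⟩
      simp [φ, Prod.ext_iff, eq_comm]
    rw [hprod, card_product, card_singleton, mul_one, card_filter_ofNat_val_eq]
  calc gammaKR (cylGrid (m * t) n) k ≤ (k + 1) * #{v | φ v ∈ D} + k * #{v | φ v ∈ P} :=
        gammaKR_le_of_dominatesOutside (h.comap hlift) k
    _ = t * ((k + 1) * #D + k * #P) := by
      rw [card_filter_map_mem hfiber, card_filter_map_mem hfiber]
      ring

end Covering

namespace CylEight

def phase (r : Fin 8) (s : ZMod 5) : ZMod 5 := 2 * (r.val : ZMod 5) + s

theorem phase_cases (r : Fin 8) (s : ZMod 5) :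
    phase r s = 0 ∨ (r = 0 ∧ phase r s = 2) ∨ (r = 7 ∧ phase r s = 3) ∨
      phase (r - 1) s = 0 ∨ phase (r + 1) s = 0 ∨
      (r ≠ 0 ∧ phase r s = 1) ∨ (r ≠ 7 ∧ phase r s = 4) := by
  revert r s; decide

theorem card_phase_eq_zero_add_card_seam (s : ZMod 5) :
    #{r | phase r s = 0} + #{r | r = 0 ∧ phase r s = 2 ∨ r = 7 ∧ phase r s = 3} = 2 := by
  revert s; decide

theorem card_seam (s : ZMod 5) :
    #{r | r = 0 ∧ phase r s = 2 ∨ r = 7 ∧ phase r s = 3} =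
      (if s = 2 then 1 else 0) + (if s = 4 then 1 else 0) := by
  revert s; decide

theorem eq_of_phase_eq_one {s : ZMod 5} (hs2 : s ≠ 2) (hs4 : s ≠ 4) {r r' : Fin 8}
    (hr : r ≠ 0 ∧ phase r s = 1) (hr' : r' ≠ 0 ∧ phase r' s = 1) : r = r' := by
  revert s r r'; decide

theorem eq_of_phase_eq_four {s : ZMod 5} (hs2 : s ≠ 2) (hs4 : s ≠ 4) {r r' : Fin 8}
    (hr : r ≠ 7 ∧ phase r s = 4) (hr' : r' ≠ 7 ∧ phase r' s = 4) : r = r' := by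
  revert s r r'; decide

theorem exists_offset (s : ZMod 5) : ∃ e : ZMod 5, e ≠ 2 ∧ e ≠ 4 ∧ s + e ≠ 2 ∧ s + e ≠ 4 := by
  revert s; decide

variable {n : ℕ}

def codeSet (e : ZMod 5) : Finset (Fin 8 × Fin n) :=
  {v | phase v.1 (v.2.val + e) = 0}

def seamSet (e : ZMod 5) : Finset (Fin 8 × Fin n) :=
  {v | v.1 = 0 ∧ phase v.1 (v.2.val + e) = 2 ∨ v.1 = 7 ∧ phase v.1 (v.2.val + e) = 3}

def bottomSet (e : ZMod 5) : Finset (Fin 8 × Fin n) :=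
  {v | v.2.val = 0 ∧ v.1 ≠ 0 ∧ phase v.1 (v.2.val + e) = 1}

def topSet (e : ZMod 5) : Finset (Fin 8 × Fin n) :=
  {v | v.2.val = n - 1 ∧ v.1 ≠ 7 ∧ phase v.1 (v.2.val + e) = 4}

theorem mem_codeSet {e : ZMod 5} {v : Fin 8 × Fin n} :
    v ∈ codeSet e ↔ phase v.1 (v.2.val + e) = 0 := by
  simp [codeSet]

theorem dominatesOutside_codeSet (e : ZMod 5) :
    DominatesOutside (cylGrid 8 n) (codeSet e) (seamSet e ∪ bottomSet e ∪ topSet e) := by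
  rintro ⟨r, j⟩ hD hP
  simp only [codeSet, seamSet, bottomSet, topSet, mem_union, mem_filter, mem_univ, true_and,
    not_or, not_and] at hD hP
  obtain ⟨⟨⟨hseam0, hseam7⟩, hbot⟩, htop⟩ := hP
  rcases phase_cases r (j.val + e) with h | h | h | h | h | h | h
  · exact absurd h hD
  · exact absurd h.2 (hseam0 h.1)
  · exact absurd h.2 (hseam7 h.1)
  · exact ⟨(r - 1, j), mem_codeSet.mpr h, by simp [cylGrid, boxProd_adj, cycleGraph_adj]⟩
  · exact ⟨(r + 1, j), mem_codeSet.mpr h, by simp [cylGrid, boxProd_adj, cycleGraph_adj]⟩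
  · have hj : j.val ≠ 0 := fun hj => hbot hj h.1 h.2
    refine ⟨(r, ⟨j.val - 1, by omega⟩), mem_codeSet.mpr ?_, ?_⟩
    · unfold phase at h ⊢
      rw [Nat.cast_pred (Nat.pos_of_ne_zero hj)]
      linear_combination h.2
    · simp [cylGrid, boxProd_adj, pathGraph_adj]
      omega
  · have hj : j.val + 1 < n := by
      by_contra hj
      exact htop (by omega) h.1 h.2
    refine ⟨(r, ⟨j.val + 1, hj⟩), mem_codeSet.mpr ?_, ?_⟩
    · unfold phase at h ⊢
      push_cast
      have h5 : (5 : ZMod 5) = 0 := rfl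
      linear_combination h.2 + h5
    · simp [cylGrid, boxProd_adj, pathGraph_adj]

theorem card_codeSet_add_card_seamSet (e : ZMod 5) :
    #(codeSet (n := n) e) + #(seamSet (n := n) e) = 2 * n := by
  rw [codeSet, seamSet, card_filter_prod_eq_sum, card_filter_prod_eq_sum, ← sum_add_distrib]
  simp only [card_phase_eq_zero_add_card_seam, sum_const, card_univ, Fintype.card_fin,
    smul_eq_mul, mul_comm]

theorem le_card_seamSet (e : ZMod 5) : 2 * (n / 5) ≤ #(seamSet (n := n) e) := by
  rw [seamSet, card_filter_prod_eq_sum]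
  simp only [card_seam, sum_add_distrib, sum_boole, ← eq_sub_iff_add_eq, Nat.cast_id]
  have h2 := div_le_card_filter_natCast_eq n 5 (2 - e)
  have h4 := div_le_card_filter_natCast_eq n 5 (4 - e)
  omega

theorem card_bottomSet_le_one {e : ZMod 5} (he2 : e ≠ 2) (he4 : e ≠ 4) :
    #(bottomSet (n := n) e) ≤ 1 := by
  refine card_le_one.mpr ?_
  rintro ⟨r, j⟩ hrj ⟨r', j'⟩ hrj'
  simp only [bottomSet, mem_filter, mem_univ, true_and] at hrj hrj'
  obtain rfl : j = j' := Fin.ext (hrj.1.trans hrj'.1.symm)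
  have hs : (j.val : ZMod 5) + e = e := by rw [hrj.1, Nat.cast_zero, zero_add]
  rw [hs] at hrj hrj'
  exact Prod.ext (eq_of_phase_eq_one he2 he4 hrj.2 hrj'.2) rfl

theorem card_topSet_le_one {e : ZMod 5} (he2 : ((n - 1 : ℕ) : ZMod 5) + e ≠ 2)
    (he4 : ((n - 1 : ℕ) : ZMod 5) + e ≠ 4) : #(topSet (n := n) e) ≤ 1 := by
  refine card_le_one.mpr ?_
  rintro ⟨r, j⟩ hrj ⟨r', j'⟩ hrj'
  simp only [topSet, mem_filter, mem_univ, true_and] at hrj hrj'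
  obtain rfl : j = j' := Fin.ext (hrj.1.trans hrj'.1.symm)
  have hs : (j.val : ZMod 5) = ((n - 1 : ℕ) : ZMod 5) := by rw [hrj.1]
  rw [hs] at hrj hrj'
  exact Prod.ext (eq_of_phase_eq_four he2 he4 hrj.2 hrj'.2) rfl

theorem exists_dominatesOutside (k n : ℕ) :
    ∃ D P : Finset (Fin 8 × Fin n), DominatesOutside (cylGrid 8 n) D P ∧
      (k + 1) * #D + k * #P + 2 * (n / 5) ≤ 2 * n * (k + 1) + 2 * k := by
  obtain ⟨e, he2, he4, hs2, hs4⟩ := exists_offset ((n - 1 : ℕ) : ZMod 5)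
  refine ⟨codeSet e, seamSet e ∪ bottomSet e ∪ topSet e, dominatesOutside_codeSet e, ?_⟩
  have hP : #(seamSet e ∪ bottomSet e ∪ topSet e) ≤ #(seamSet (n := n) e) + 2 :=
    calc _ ≤ #(seamSet e) + #(bottomSet e) + #(topSet e) :=
          (card_union_le _ _).trans (add_le_add_left (card_union_le _ _) _)
      _ ≤ #(seamSet e) + 1 + 1 := by
          gcongr
          exacts [card_bottomSet_le_one he2 he4, card_topSet_le_one hs2 hs4]
  have hsum := card_codeSet_add_card_seamSet (n := n) e
  have hseam := le_card_seamSet (n := n) e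
  calc (k + 1) * #(codeSet e) + k * #(seamSet e ∪ bottomSet e ∪ topSet e) + 2 * (n / 5)
      ≤ (k + 1) * #(codeSet e) + k * (#(seamSet e) + 2) + #(seamSet e) := by gcongr
    _ = (k + 1) * (#(codeSet e) + #(seamSet e)) + 2 * k := by ring
    _ = 2 * n * (k + 1) + 2 * k := by rw [hsum]; ring

end CylEight

theorem gammaKR_C8t_general (k t n : ℕ) :
    (gammaKR (cylGrid (8 * t) n) k : ℤ) ≤
      (t : ℤ) * (2 * (n : ℤ) * ((k : ℤ) + 1) -
        (⌊((n : ℚ) - 2) / 5⌋ + ⌊(n : ℚ) / 5⌋) + 2 * (k : ℤ)) := by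
  obtain ⟨D, P, hdom, hweight⟩ := CylEight.exists_dominatesOutside k n
  have hγ := gammaKR_cylGrid_mul_le t n k hdom
  zify at hγ hweight
  have hfloor : ⌊((n : ℚ) - 2) / 5⌋ + ⌊(n : ℚ) / 5⌋ ≤ 2 * ((n : ℤ) / 5) := by
    have hn5 : ⌊(n : ℚ) / 5⌋ = (n : ℤ) / 5 := by exact_mod_cast Rat.floor_natCast_div_natCast n 5
    have hmono : ⌊((n : ℚ) - 2) / 5⌋ ≤ ⌊(n : ℚ) / 5⌋ := Int.floor_mono (by linarith)
    omega
  refine hγ.trans (mul_le_mul_of_nonneg_left ?_ (by positivity))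
  linarith

theorem gammaKR_C8t (k t n : ℕ) (hk : 1 ≤ k) (ht : 1 ≤ t) (hn : 2 ≤ n) :
    (gammaKR (cylGrid (8 * t) n) k : ℤ) ≤
      (t : ℤ) * (2 * (n : ℤ) * ((k : ℤ) + 1) -
        (⌊((n : ℚ) - 2) / 5⌋ + ⌊(n : ℚ) / 5⌋) + 2 * (k : ℤ)) :=
  gammaKR_C8t_general k t n
end

section
/- Let k ≥ 1, t ≥ 1, and n ≥ 2. Then γ_{[k]R}(C_{9t} □ P_n) ≤ t(2n(k+1) + 2k). -/
/-- Residue case analysis for the diagonal pattern, proved by `decide`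
(placed before `open scoped Classical` so the `Nat` instances are used). -/
lemma mod9_cases : ∀ x y : Fin 9, x.val ≠ (2*y.val) % 9 → x.val ≠ (2*y.val+5) % 9 →
    ((x.val+1) % 9 = (2*y.val) % 9 ∨ (x.val+1) % 9 = (2*y.val+5) % 9)
    ∨ ((x.val+8) % 9 = (2*y.val) % 9 ∨ (x.val+8) % 9 = (2*y.val+5) % 9)
    ∨ (x.val = (2*y.val+2) % 9) ∨ (x.val = (2*y.val+7) % 9) ∨ (x.val = (2*y.val+3) % 9) := by
  decide

open Finset
open scoped Classical

/-- Sum over `Fin (9*t)` of a function of the residue mod 9. -/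
lemma sum_fin_mod9 (t : ℕ) (h : ℕ → ℕ) :
    ∑ i : Fin (9*t), h (i.val % 9) = t * ∑ r ∈ Finset.range 9, h r := by
  rw [Fin.sum_univ_eq_sum_range (fun i => h (i % 9))]
  induction t with
  | zero => simp
  | succ t ih =>
    have h9 : 9 * (t+1) = 9*t + 9 := by ring
    rw [h9]
    rw [Finset.sum_range_add]
    rw [ih]
    have : ∑ i ∈ Finset.range 9, h ((9*t + i) % 9) = ∑ r ∈ Finset.range 9, h r := by
      apply Finset.sum_congr rfl
      intro r hr
      simp only [Finset.mem_range] at hr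
      congr 1
      omega
    rw [this]
    ring

lemma sum_fin_indicator (t c x : ℕ) (hc : c < 9) :
    ∑ i : Fin (9*t), (if i.val % 9 = c then x else 0) = t * x := by
  rw [sum_fin_mod9 t (fun r => if r = c then x else 0)]
  rw [Finset.sum_ite_eq' (Finset.range 9) c (fun _ => x)]
  simp [Finset.mem_range.mpr hc]

lemma key_ineq {V : Type*} [Fintype V] (G : SimpleGraph V) (k : ℕ) (hk : 1 ≤ k) (f : V → ℕ)
    (hf : ∀ u, 0 < f u → k ≤ f u) (v u0 : V) (h0 : G.Adj v u0) (hfu0 : f u0 = k + 1) :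
    k + (Finset.univ.filter fun u => G.Adj v u ∧ 0 < f u).card ≤
      f v + ∑ u ∈ Finset.univ.filter (fun u => G.Adj v u), f u := by
  set S := Finset.univ.filter (fun u => G.Adj v u ∧ 0 < f u) with hS
  have hu0S : u0 ∈ S := by
    simp only [hS, Finset.mem_filter, Finset.mem_univ, true_and]
    exact ⟨h0, by omega⟩
  have hsub : S ⊆ Finset.univ.filter (fun u => G.Adj v u) := by
    intro u hu
    simp only [hS, Finset.mem_filter, Finset.mem_univ, true_and] at hu ⊢
    exact hu.1
  have h1 : ∑ u ∈ S, f u ≤ ∑ u ∈ Finset.univ.filter (fun u => G.Adj v u), f u :=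
    Finset.sum_le_sum_of_subset hsub
  have h2 : k * (S.erase u0).card ≤ ∑ u ∈ S.erase u0, f u := by
    rw [mul_comm, ← smul_eq_mul]
    apply Finset.card_nsmul_le_sum
    intro u hu
    have := (Finset.mem_erase.mp hu).2
    simp only [hS, Finset.mem_filter, Finset.mem_univ, true_and] at this
    exact hf u this.2
  have h3 : ∑ u ∈ S.erase u0, f u + f u0 = ∑ u ∈ S, f u := Finset.sum_erase_add S f hu0S
  have hcard : 1 ≤ S.card := Finset.card_pos.2 ⟨u0, hu0S⟩
  have hce : (S.erase u0).card = S.card - 1 := Finset.card_erase_of_mem hu0S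
  have hmul : 1 * (S.card - 1) ≤ k * (S.card - 1) := Nat.mul_le_mul_right _ hk
  rw [hce] at h2
  omega

/-- Existence of a heavy neighbour for the diagonal pattern. -/
lemma nbr_exists (t n : ℕ) (ht : 1 ≤ t) (hn : 2 ≤ n) (i : Fin (9*t)) (j : Fin n)
    (hP : ¬(i.val % 9 = (2*j.val) % 9 ∨ i.val % 9 = (2*j.val+5) % 9))
    (hQ : ¬((j.val = 0 ∧ i.val % 9 = 3) ∨ (j.val = n-1 ∧ i.val % 9 = (2*n) % 9))) :
    ∃ u : Fin (9*t) × Fin n, (cylGrid (9*t) n).Adj (i,j) u ∧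
      (u.1.val % 9 = (2*u.2.val) % 9 ∨ u.1.val % 9 = (2*u.2.val+5) % 9) := by
  have hm : 9 ≤ 9*t := by omega
  haveI : NeZero (9*t) := ⟨by omega⟩
  have h9 : (9:ℕ) ∣ 9*t := ⟨t, rfl⟩
  push_neg at hP hQ
  set a := i.val with ha
  set b := j.val with hb
  have hbn : b < n := j.isLt
  have hone : ((1 : Fin (9*t))).val = 1 := by
    rw [Fin.val_one']
    exact Nat.mod_eq_of_lt (by omega)
  -- cycle adjacency with i+1 and i-1
  have hadj1 : (SimpleGraph.cycleGraph (9*t)).Adj i (i+1) := by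
    rw [SimpleGraph.cycleGraph_adj']
    right
    rw [add_sub_cancel_left, hone]
  have hadj2 : (SimpleGraph.cycleGraph (9*t)).Adj i (i-1) := by
    rw [SimpleGraph.cycleGraph_adj']
    left
    rw [sub_sub_cancel, hone]
  have hv1 : (i+1).val % 9 = (a+1) % 9 := by
    rw [Fin.add_def, hone, Nat.mod_mod_of_dvd _ h9]
  have hv2 : (i-1).val % 9 = (a+8) % 9 := by
    rw [Fin.sub_def, hone, Nat.mod_mod_of_dvd _ h9]
    omega
  have hd : ((a+1) % 9 = (2*b) % 9 ∨ (a+1) % 9 = (2*b+5) % 9)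
      ∨ ((a+8) % 9 = (2*b) % 9 ∨ (a+8) % 9 = (2*b+5) % 9)
      ∨ (a % 9 = (2*b+2) % 9) ∨ (a % 9 = (2*b+7) % 9) ∨ (a % 9 = (2*b+3) % 9) := by
    have h1 : a % 9 < 9 := Nat.mod_lt _ (by omega)
    have h2 : b % 9 < 9 := Nat.mod_lt _ (by omega)
    have t1 : (a+1) % 9 = (a % 9 + 1) % 9 := by omega
    have t2 : (a+8) % 9 = (a % 9 + 8) % 9 := by omega
    have t3 : (2*b) % 9 = (2*(b % 9)) % 9 := by omega
    have t4 : (2*b+5) % 9 = (2*(b % 9)+5) % 9 := by omega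
    have t5 : (2*b+2) % 9 = (2*(b % 9)+2) % 9 := by omega
    have t6 : (2*b+7) % 9 = (2*(b % 9)+7) % 9 := by omega
    have t7 : (2*b+3) % 9 = (2*(b % 9)+3) % 9 := by omega
    rw [t3, t4] at hP
    rw [t1, t2, t3, t4, t5, t6, t7]
    exact mod9_cases ⟨a % 9, h1⟩ ⟨b % 9, h2⟩ hP.1 hP.2
  rcases hd with hc | hc | hc | hc | hc
  · exact ⟨(i+1, j), Or.inl ⟨hadj1, rfl⟩, by rw [hv1]; exact hc⟩
  · exact ⟨(i-1, j), Or.inl ⟨hadj2, rfl⟩, by rw [hv2]; exact hc⟩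
  · by_cases hb1 : b + 1 < n
    · refine ⟨(i, ⟨b+1, hb1⟩), Or.inr ⟨?_, rfl⟩, ?_⟩
      · rw [SimpleGraph.pathGraph_adj]; left; rfl
      · left; simpa using by omega
    · exfalso
      have hbn1 : b = n - 1 := by omega
      exact absurd (hQ.2 hbn1) (by omega)
  · by_cases hb1 : b + 1 < n
    · refine ⟨(i, ⟨b+1, hb1⟩), Or.inr ⟨?_, rfl⟩, ?_⟩
      · rw [SimpleGraph.pathGraph_adj]; left; rfl
      · right; simpa using by omega
    · have hb0 : 1 ≤ b := by omega
      refine ⟨(i, ⟨b-1, by omega⟩), Or.inr ⟨?_, rfl⟩, ?_⟩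
      · rw [SimpleGraph.pathGraph_adj]; right; simp; omega
      · left; simpa using by omega
  · have hb0 : 1 ≤ b := by
      by_contra hb0
      have : b = 0 := by omega
      exact absurd (hQ.1 this) (by omega)
    refine ⟨(i, ⟨b-1, by omega⟩), Or.inr ⟨?_, rfl⟩, ?_⟩
    · rw [SimpleGraph.pathGraph_adj]; right; simp; omega
    · right; simpa using by omega

theorem gammaKR_C9t (k t n : ℕ) (hk : 1 ≤ k) (ht : 1 ≤ t) (hn : 2 ≤ n) :
    gammaKR (cylGrid (9 * t) n) k ≤ t * (2 * n * (k + 1) + 2 * k) := by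
  set f : Fin (9*t) × Fin n → ℕ := fun v =>
    if v.1.val % 9 = (2*v.2.val) % 9 ∨ v.1.val % 9 = (2*v.2.val+5) % 9 then k+1
    else if (v.2.val = 0 ∧ v.1.val % 9 = 3) ∨ (v.2.val = n-1 ∧ v.1.val % 9 = (2*n) % 9) then k
    else 0 with hf
  have hfval : ∀ v, 0 < f v → k ≤ f v := by
    intro v hv
    simp only [hf] at hv ⊢
    split_ifs at hv ⊢ <;> omega
  have hdf : IsKRomanDF (cylGrid (9*t) n) k f := by
    constructor
    · intro v; simp only [hf]; split_ifs <;> omega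
    · intro v hv
      simp only [hf] at hv
      split_ifs at hv with h1 h2
      · omega
      · omega
      · obtain ⟨u0, hadj, hPu0⟩ := nbr_exists t n ht hn v.1 v.2 h1 h2
        have hfu0 : f u0 = k + 1 := by simp only [hf]; rw [if_pos hPu0]
        exact key_ineq _ k hk f hfval v u0 hadj hfu0
  -- the weight
  have hsum : ∑ v, f v = t * (2 * n * (k + 1) + 2 * k) := by
    rw [Fintype.sum_prod_type_right]
    have hcol : ∀ j : Fin n, ∑ i : Fin (9*t), f (i, j) =
        2*(t*(k+1)) + ((if j.val = 0 then t*k else 0) + (if j.val = n-1 then t*k else 0)) := by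
      intro j
      set b := j.val with hb
      have hbn : b < n := j.isLt
      have hpt : ∀ i : Fin (9*t), f (i, j) =
          ((if i.val % 9 = (2*b) % 9 then k+1 else 0)
           + (if i.val % 9 = (2*b+5) % 9 then k+1 else 0))
          + ((if b = 0 ∧ i.val % 9 = 3 then k else 0)
           + (if b = n-1 ∧ i.val % 9 = (2*n) % 9 then k else 0)) := by
        intro i
        simp only [hf]
        split_ifs <;> omega
      rw [Finset.sum_congr rfl (fun i _ => hpt i)]
      rw [Finset.sum_add_distrib, Finset.sum_add_distrib, Finset.sum_add_distrib]
      rw [sum_fin_indicator t _ (k+1) (Nat.mod_lt _ (by omega)),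
          sum_fin_indicator t _ (k+1) (Nat.mod_lt _ (by omega))]
      have e3 : ∑ i : Fin (9*t), (if b = 0 ∧ i.val % 9 = 3 then k else 0)
          = if b = 0 then t*k else 0 := by
        by_cases hb0 : b = 0
        · simp only [hb0, true_and, if_true]
          exact sum_fin_indicator t 3 k (by omega)
        · simp [hb0]
      have e4 : ∑ i : Fin (9*t), (if b = n-1 ∧ i.val % 9 = (2*n) % 9 then k else 0)
          = if b = n-1 then t*k else 0 := by
        by_cases hb0 : b = n-1
        · simp only [hb0, true_and, if_true]
          exact sum_fin_indicator t _ k (Nat.mod_lt _ (by omega))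
        · simp [hb0]
      rw [e3, e4]
      ring
    rw [Finset.sum_congr rfl (fun j _ => hcol j)]
    rw [Finset.sum_add_distrib, Finset.sum_add_distrib]
    have j0 : ∑ j : Fin n, (if j.val = 0 then t*k else 0) = t*k := by
      have : ∀ j : Fin n, (if j.val = 0 then t*k else 0)
          = if j = (⟨0, by omega⟩ : Fin n) then t*k else 0 := by
        intro j; simp [Fin.ext_iff]
      rw [Finset.sum_congr rfl (fun j _ => this j)]
      simp
    have j1 : ∑ j : Fin n, (if j.val = n-1 then t*k else 0) = t*k := by
      have : ∀ j : Fin n, (if j.val = n-1 then t*k else 0)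
          = if j = (⟨n-1, by omega⟩ : Fin n) then t*k else 0 := by
        intro j; simp [Fin.ext_iff]
      rw [Finset.sum_congr rfl (fun j _ => this j)]
      simp
    rw [j0, j1]
    simp [Finset.sum_const, Finset.card_univ]
    ring
  exact Nat.sInf_le ⟨f, hdf, hsum.symm⟩
end
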